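/- arXiv:math/0409379 — 6 statements merged into one kernel-verified Lean document; each statement's English description precedes it below -/
import Mathlib

section
/- Let a : ℝ → ℝ be measurable with 0 < m ≤ a(x) ≤ M for all x. Let σ = τ + iε be a complex number with τ, ε real. Suppose v : ℝ → ℂ is continuously differentiable, v and v' are square-integrable, v(x) → 0 and v'(x) → 0 as |x| → ∞, the function x ↦ a(x)·v'(x) is differentiable with derivative σ·v(x) + g(x), and g : ℝ → ℂ is integrable. Then |ε|·∫_ℝ |v(x)|² dx ≤ (∫_ℝ |g(x)| dx)·sup_x |v(x)| and |ε|·∫_ℝ a(x)·|v'(x)|² dx ≤ (|ε| + |τ|)·(∫_ℝ |g(x)| dx)·sup_x |v(x)|. -/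
open MeasureTheory Filter

/-- A priori energy estimates for the resolvent equation `-σ v + (a v')' = g` with
`σ = τ + iε`, obtained by multiplying by `conj v` and integrating by parts:
`|ε| ∫ |v|² ≤ (∫ |g|) · sup |v|` and `|ε| ∫ a |v'|² ≤ (|ε| + |τ|) (∫ |g|) · sup |v|`. -/
theorem resolvent_apriori_energy_estimates (m M : ℝ) (hm : 0 < m)
    (a : ℝ → ℝ) (ha : Measurable a)
    (hbd : ∀ x, m ≤ a x ∧ a x ≤ M)
    (τ ε : ℝ) (v g : ℝ → ℂ)
    (hv : ContDiff ℝ 1 v)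
    (hv2 : MemLp v 2 (volume : Measure ℝ))
    (hv'2 : MemLp (deriv v) 2 (volume : Measure ℝ))
    (hv0 : Tendsto v (cocompact ℝ) (nhds 0))
    (hv'0 : Tendsto (deriv v) (cocompact ℝ) (nhds 0))
    (hg : Integrable g)
    (heq : ∀ x : ℝ, HasDerivAt (fun y : ℝ => (a y : ℂ) * deriv v y)
        (((τ : ℂ) + (ε : ℂ) * Complex.I) * v x + g x) x) :
    |ε| * (∫ x : ℝ, ‖v x‖ ^ 2) ≤ (∫ x : ℝ, ‖g x‖) * (⨆ x : ℝ, ‖v x‖) ∧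
    |ε| * (∫ x : ℝ, a x * ‖deriv v x‖ ^ 2)
      ≤ (|ε| + |τ|) * (∫ x : ℝ, ‖g x‖) * (⨆ x : ℝ, ‖v x‖) := by
  have hvc : Continuous v := hv.continuous
  have hvd : Differentiable ℝ v := hv.differentiable one_ne_zero
  have hv'c : Continuous (deriv v) := hv.continuous_deriv le_rfl
  set σ : ℂ := (τ : ℂ) + (ε : ℂ) * Complex.I with hσ
  -- boundedness of v
  obtain ⟨S0, hS0⟩ : ∃ C, ∀ x, ‖v x‖ ≤ C := by
    have hn : Tendsto (fun x => ‖v x‖) (cocompact ℝ) (nhds 0) := by simpa using hv0.norm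
    have h1 : {x : ℝ | ‖v x‖ ≤ 1} ∈ cocompact ℝ :=
      hn.eventually_le_const (by norm_num : (0:ℝ) < 1)
    obtain ⟨K, hK, hKs⟩ := mem_cocompact.1 h1
    obtain ⟨C, hC⟩ := hK.exists_bound_of_continuousOn hvc.continuousOn
    refine ⟨max C 1, fun x => ?_⟩
    by_cases hx : x ∈ K
    · exact (hC x hx).trans (le_max_left _ _)
    · exact (hKs hx).trans (le_max_right _ _)
  have hbdd : BddAbove (Set.range fun x : ℝ => ‖v x‖) := by
    refine ⟨S0, ?_⟩; rintro _ ⟨x, rfl⟩; exact hS0 x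
  set S : ℝ := ⨆ x : ℝ, ‖v x‖ with hSdef
  have hle : ∀ x, ‖v x‖ ≤ S := fun x => le_ciSup hbdd x
  have hSnn : 0 ≤ S := le_trans (norm_nonneg (v 0)) (hle 0)
  -- pointwise bound for a
  have haM : ∀ x, ‖a x‖ ≤ M := fun x => by
    rw [Real.norm_eq_abs, abs_of_pos (hm.trans_le (hbd x).1)]; exact (hbd x).2
  -- integrabilities
  have hI1 : Integrable (fun x : ℝ => ‖v x‖ ^ 2) := by
    have := hv2.integrable_norm_rpow two_ne_zero ENNReal.ofNat_ne_top
    refine this.congr (ae_of_all _ fun x => ?_)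
    norm_num [Real.rpow_natCast]
  have hI1' : Integrable (fun x : ℝ => ‖deriv v x‖ ^ 2) := by
    have := hv'2.integrable_norm_rpow two_ne_zero ENNReal.ofNat_ne_top
    refine this.congr (ae_of_all _ fun x => ?_)
    norm_num [Real.rpow_natCast]
  have hI3r : Integrable (fun x : ℝ => a x * ‖deriv v x‖ ^ 2) :=
    hI1'.bdd_mul ha.aestronglyMeasurable (ae_of_all _ haM)
  have hI1nn : 0 ≤ ∫ x : ℝ, ‖v x‖ ^ 2 := integral_nonneg fun x => sq_nonneg _
  have hI3nn : 0 ≤ ∫ x : ℝ, a x * ‖deriv v x‖ ^ 2 :=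
    integral_nonneg fun x => mul_nonneg (hm.le.trans (hbd x).1) (sq_nonneg _)
  have hGnn : 0 ≤ ∫ x : ℝ, ‖g x‖ := integral_nonneg fun x => norm_nonneg _
  have mc : ∀ z : ℂ, z * (starRingEnd ℂ) z = ((‖z‖ ^ 2 : ℝ) : ℂ) := fun z => by
    rw [Complex.mul_conj]; norm_cast; rw [Complex.normSq_eq_norm_sq]
  have hIvv : Integrable (fun x : ℝ => v x * (starRingEnd ℂ) (v x)) := by
    refine hI1.ofReal.congr (ae_of_all _ fun x => ?_)
    simp only [mc]; rfl
  have hIZ : Integrable (fun x : ℝ => g x * (starRingEnd ℂ) (v x)) := by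
    have := hg.bdd_mul (Complex.continuous_conj.comp hvc).aestronglyMeasurable
      (ae_of_all _ fun x => by simpa using hle x)
    exact this.congr (ae_of_all _ fun x => mul_comm _ _)
  have hIav : Integrable (fun x : ℝ => (a x : ℂ) * (deriv v x * (starRingEnd ℂ) (deriv v x))) := by
    refine hI3r.ofReal.congr (ae_of_all _ fun x => ?_)
    simp only [mc]; push_cast; rfl
  -- the function F and its derivative
  set F : ℝ → ℂ := fun x => (a x : ℂ) * deriv v x * (starRingEnd ℂ) (v x) with hFdef
  set F' : ℝ → ℂ := fun x =>
    σ * (v x * (starRingEnd ℂ) (v x)) + g x * (starRingEnd ℂ) (v x)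
      + (a x : ℂ) * (deriv v x * (starRingEnd ℂ) (deriv v x)) with hF'def
  have hF : ∀ x, HasDerivAt F (F' x) x := by
    intro x
    have h2 : HasDerivAt (fun y => (starRingEnd ℂ) (v y)) ((starRingEnd ℂ) (deriv v x)) x :=
      Complex.conjCLE.toContinuousLinearMap.hasFDerivAt.comp_hasDerivAt x (hvd x).hasDerivAt
    have := (heq x).mul h2
    convert this using 1
    show σ * (v x * (starRingEnd ℂ) (v x)) + g x * (starRingEnd ℂ) (v x) + (a x : ℂ) * (deriv v x * (starRingEnd ℂ) (deriv v x)) = _; ring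
    all_goals rfl
  have hFcont : Continuous F := continuous_iff_continuousAt.2 fun x => (hF x).continuousAt
  have hIF' : Integrable F' := ((hIvv.const_mul σ).add hIZ).add hIav
  -- F tends to 0 at both ends
  have hFt : Tendsto F (cocompact ℝ) (nhds 0) := by
    have hb : Tendsto (fun x => M * ‖deriv v x‖ * ‖v x‖) (cocompact ℝ) (nhds 0) := by
      have := ((hv'0.norm.const_mul M).mul hv0.norm)
      simpa using this
    refine squeeze_zero_norm (fun x => ?_) hb
    have : ‖F x‖ = ‖a x‖ * ‖deriv v x‖ * ‖v x‖ := by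
      simp [hFdef, norm_mul]
    rw [this]
    gcongr
    · exact haM x
  have hFtop : Tendsto F atTop (nhds 0) := hFt.mono_left (by
    rw [cocompact_eq_atBot_atTop]; exact le_sup_right)
  have hFbot : Tendsto F atBot (nhds 0) := hFt.mono_left (by
    rw [cocompact_eq_atBot_atTop]; exact le_sup_left)
  -- ∫ F' = 0
  have hzero : (∫ x : ℝ, F' x) = 0 := by
    have h1 : (∫ x in Set.Iic (0:ℝ), F' x) = F 0 - 0 :=
      integral_Iic_of_hasDerivAt_of_tendsto hFcont.continuousWithinAt
        (fun x _ => hF x) hIF'.integrableOn hFbot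
    have h2 : (∫ x in Set.Ioi (0:ℝ), F' x) = 0 - F 0 :=
      integral_Ioi_of_hasDerivAt_of_tendsto hFcont.continuousWithinAt
        (fun x _ => hF x) hIF'.integrableOn hFtop
    have h3 := intervalIntegral.integral_Iic_add_Ioi (b := (0:ℝ)) hIF'.integrableOn hIF'.integrableOn
    rw [h1, h2] at h3
    rw [← h3]; ring
  -- convert complex integrals of real-valued functions
  have e1 : (∫ x : ℝ, v x * (starRingEnd ℂ) (v x)) = Complex.ofReal (∫ x : ℝ, ‖v x‖ ^ 2) := by
    rw [integral_congr_ae (ae_of_all _ fun x => mc (v x))]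
    exact integral_ofReal
  have e3 : (∫ x : ℝ, (a x : ℂ) * (deriv v x * (starRingEnd ℂ) (deriv v x)))
      = Complex.ofReal (∫ x : ℝ, a x * ‖deriv v x‖ ^ 2) := by
    rw [integral_congr_ae (ae_of_all _ fun x => show _ = Complex.ofReal (a x * ‖deriv v x‖ ^ 2) by
      rw [mc (deriv v x)]; push_cast; ring)]
    exact integral_ofReal
  set I1 : ℝ := ∫ x : ℝ, ‖v x‖ ^ 2 with hI1def
  set I3 : ℝ := ∫ x : ℝ, a x * ‖deriv v x‖ ^ 2 with hI3def
  set Z : ℂ := ∫ x : ℝ, g x * (starRingEnd ℂ) (v x) with hZdef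
  have hmain : σ * (I1 : ℂ) + Z + (I3 : ℂ) = 0 := by
    have hadd1 : Integrable (fun x : ℝ =>
        σ * (v x * (starRingEnd ℂ) (v x)) + g x * (starRingEnd ℂ) (v x)) :=
      (hIvv.const_mul σ).add hIZ
    rw [← hzero, hF'def]
    rw [integral_add hadd1 hIav, integral_add (hIvv.const_mul σ) hIZ,
      integral_const_mul, e1, e3]
  -- imaginary and real part identities
  have him : ε * I1 + Z.im = 0 := by
    have := congrArg Complex.im hmain
    simpa [hσ, Complex.add_im, Complex.mul_im] using this
  have hre : τ * I1 + Z.re + I3 = 0 := by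
    have := congrArg Complex.re hmain
    simpa [hσ, Complex.add_re, Complex.mul_re] using this
  -- bound on Z
  have hZb : ‖Z‖ ≤ (∫ x : ℝ, ‖g x‖) * S := by
    calc ‖Z‖ ≤ ∫ x : ℝ, ‖g x * (starRingEnd ℂ) (v x)‖ := norm_integral_le_integral_norm _
      _ = ∫ x : ℝ, ‖g x‖ * ‖v x‖ := by simp [norm_mul]
      _ ≤ ∫ x : ℝ, ‖g x‖ * S := by
          refine integral_mono ?_ (hg.norm.mul_const S) fun x => ?_
          · exact (hIZ.norm.congr (ae_of_all _ fun x => by simp [norm_mul]))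
          · exact mul_le_mul_of_nonneg_left (hle x) (norm_nonneg _)
      _ = (∫ x : ℝ, ‖g x‖) * S := by rw [integral_mul_const]
  have h1 : |ε| * I1 ≤ (∫ x : ℝ, ‖g x‖) * S := by
    have : ε * I1 = -Z.im := by linarith
    have h : |ε| * I1 = |Z.im| := by
      rw [← abs_of_nonneg hI1nn, ← abs_mul, this, abs_neg]
    rw [h]
    exact (Complex.abs_im_le_norm Z).trans hZb
  refine ⟨h1, ?_⟩
  have h2 : I3 ≤ |τ| * I1 + ‖Z‖ := by
    have hre' : I3 = -(τ * I1) - Z.re := by linarith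
    have hτ : -(τ * I1) ≤ |τ| * I1 := by
      calc -(τ * I1) ≤ |τ * I1| := neg_le_abs _
        _ = |τ| * I1 := by rw [abs_mul, abs_of_nonneg hI1nn]
    have hz : -Z.re ≤ ‖Z‖ := by
      have := Complex.abs_re_le_norm Z
      linarith [neg_abs_le Z.re, abs_nonneg Z.re, le_abs_self Z.re, (neg_le_abs Z.re)]
    linarith
  have hεZ : |ε| * ‖Z‖ ≤ |ε| * ((∫ x : ℝ, ‖g x‖) * S) :=
    mul_le_mul_of_nonneg_left hZb (abs_nonneg ε)
  have hτ1 : |τ| * (|ε| * I1) ≤ |τ| * ((∫ x : ℝ, ‖g x‖) * S) :=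
    mul_le_mul_of_nonneg_left h1 (abs_nonneg τ)
  nlinarith [abs_nonneg ε, abs_nonneg τ, norm_nonneg Z, mul_le_mul_of_nonneg_left h2 (abs_nonneg ε)]
end

section
/- Let Ω : ℝ → ℝ be a nonnegative, nondecreasing, bounded measurable function, let k : ℝ → ℝ be a nonnegative integrable function, and let D ≥ 0. Denote S = sup_{x∈ℝ} Ω(x). If for every x ∈ ℝ one has Ω(x) ≤ D·√S + 2·∫_{(−∞,x]} k(y)·Ω(y) dy, then √S ≤ D·(2 + 8·exp(2·∫_ℝ k(y) dy)). -/
open MeasureTheory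

lemma aux_inv_one_sub_le_exp {u : ℝ} (h0 : 0 ≤ u) (h2 : u ≤ 1/2) :
    (1 - u)⁻¹ ≤ Real.exp (u + 2*u^2) := by
  have h1 : 0 < 1 - u := by linarith
  have hle : (1 - u)⁻¹ ≤ 1 + u + 2*u^2 := by
    rw [inv_eq_one_div, div_le_iff₀ h1]
    nlinarith
  exact hle.trans (by have := Real.add_one_le_exp (u + 2*u^2); linarith)

set_option maxHeartbeats 1600000 in
/-- Gronwall-type lemma with square-root structure: if `Ω` is nonnegative, nondecreasing,
bounded measurable with supremum `S`, `k ≥ 0` is integrable, `D ≥ 0`, and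
`Ω(x) ≤ D √S + 2 ∫_{(-∞,x]} k Ω` for all `x`, then
`√S ≤ D (2 + 8 exp(2 ∫ k))`. -/
theorem gronwall_sqrt_lemma (Ω k : ℝ → ℝ) (D : ℝ)
    (hΩ0 : ∀ x, 0 ≤ Ω x) (hΩmono : Monotone Ω) (hΩbdd : BddAbove (Set.range Ω))
    (hΩmeas : Measurable Ω)
    (hk0 : ∀ x, 0 ≤ k x) (hkint : Integrable k) (hD : 0 ≤ D)
    (S : ℝ) (hS : S = ⨆ x : ℝ, Ω x)
    (hyp : ∀ x : ℝ, Ω x ≤ D * Real.sqrt S + 2 * ∫ y in Set.Iic x, k y * Ω y) :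
    Real.sqrt S ≤ D * (2 + 8 * Real.exp (2 * ∫ y : ℝ, k y)) := by
  set Kinf : ℝ := ∫ y : ℝ, k y with hKinf_def
  set A : ℝ := D * Real.sqrt S with hA_def
  set C : ℝ := 2 + 8 * Real.exp (2 * Kinf) with hC_def
  have hΩS : ∀ x, Ω x ≤ S := fun x => hS ▸ le_ciSup hΩbdd x
  have hS0 : 0 ≤ S := (hΩ0 0).trans (hΩS 0)
  have hA0 : 0 ≤ A := mul_nonneg hD (Real.sqrt_nonneg S)
  have hC0 : 0 < C := by positivity
  -- it suffices to bound S itself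
  suffices h : S ≤ A * C by
    rcases eq_or_lt_of_le (Real.sqrt_nonneg S) with h0 | h0
    · rw [← h0]; positivity
    · have hs2 : Real.sqrt S * Real.sqrt S = S := Real.mul_self_sqrt hS0
      rw [hA_def] at h
      nlinarith [h, hs2, h0, hC0]
  -- integrability of the product
  have hgint : Integrable (fun y => k y * Ω y) := by
    have hbd : ∃ Cb, ∀ x, ‖Ω x‖ ≤ Cb :=
      ⟨S, fun x => by rw [Real.norm_eq_abs, abs_of_nonneg (hΩ0 x)]; exact hΩS x⟩
    have := hkint.bdd_mul hΩmeas.aestronglyMeasurable (ae_of_all _ hbd.choose_spec)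
    simpa [mul_comm] using this
  set K : ℝ → ℝ := fun x => ∫ y in Set.Iic x, k y with hK_def
  set I : ℝ → ℝ := fun x => ∫ y in Set.Iic x, k y * Ω y with hI_def
  have hyp' : ∀ x, Ω x ≤ A + 2 * I x := fun x => hyp x
  have hK_nonneg : ∀ x, 0 ≤ K x := fun x =>
    setIntegral_nonneg measurableSet_Iic fun y _ => hk0 y
  have hI_nonneg : ∀ x, 0 ≤ I x := fun x =>
    setIntegral_nonneg measurableSet_Iic fun y _ => mul_nonneg (hk0 y) (hΩ0 y)
  have hK_mono : Monotone K := fun a b hab =>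
    setIntegral_mono_set hkint.integrableOn (ae_of_all _ hk0)
      ((Set.Iic_subset_Iic.2 hab).eventuallyLE)
  have hK_le : ∀ x, K x ≤ Kinf := fun x =>
    setIntegral_le_integral hkint (ae_of_all _ hk0)
  have hKinf0 : 0 ≤ Kinf := (hK_nonneg 0).trans (hK_le 0)
  -- splitting inequality
  have hsplit : ∀ a b : ℝ, a ≤ b → I b ≤ I a + Ω b * (K b - K a) := by
    intro a b hab
    have hIab : I b - I a = ∫ y in Set.Ioc a b, k y * Ω y := by
      rw [hI_def]
      rw [intervalIntegral.integral_Iic_sub_Iic hgint.integrableOn hgint.integrableOn,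
        intervalIntegral.integral_of_le hab]
    have hKab : K b - K a = ∫ y in Set.Ioc a b, k y := by
      rw [hK_def]
      rw [intervalIntegral.integral_Iic_sub_Iic hkint.integrableOn hkint.integrableOn,
        intervalIntegral.integral_of_le hab]
    have hmono : (∫ y in Set.Ioc a b, k y * Ω y) ≤ ∫ y in Set.Ioc a b, k y * Ω b :=
      setIntegral_mono_on hgint.integrableOn (hkint.mul_const (Ω b)).integrableOn
        measurableSet_Ioc (fun y hy => mul_le_mul_of_nonneg_left (hΩmono hy.2) (hk0 y))
    have heq : (∫ y in Set.Ioc a b, k y * Ω b) = (K b - K a) * Ω b := by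
      rw [integral_mul_const, hKab]
    nlinarith [hmono, heq, hIab]
  have hIK : ∀ x, I x ≤ Ω x * K x := by
    intro x
    have hmono : I x ≤ ∫ y in Set.Iic x, k y * Ω x :=
      setIntegral_mono_on hgint.integrableOn (hkint.mul_const (Ω x)).integrableOn
        measurableSet_Iic (fun y hy => mul_le_mul_of_nonneg_left (hΩmono hy) (hk0 y))
    rw [integral_mul_const] at hmono
    rw [mul_comm]
    exact hmono
  -- continuity of K
  have hKcont : Continuous K := by
    have h1 : Continuous fun x => ∫ t in (0:ℝ)..x, k t := hkint.continuous_primitive 0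
    have h2 : K = fun x => (∫ t in (0:ℝ)..x, k t) + K 0 := by
      funext x
      have := intervalIntegral.integral_Iic_sub_Iic (hkint.integrableOn (s := Set.Iic (0:ℝ)))
        (hkint.integrableOn (s := Set.Iic x))
      simp only [hK_def]
      linarith
    rw [h2]
    exact h1.add continuous_const
  have hKbot : ∀ c : ℝ, 0 < c → ∃ y, K y < c := by
    intro c hc
    have h1 : Filter.Tendsto (fun a : ℝ => ∫ x in a..(0:ℝ), k x) Filter.atBot
        (nhds (∫ x in Set.Iic (0:ℝ), k x)) :=
      intervalIntegral_tendsto_integral_Iic 0 hkint.integrableOn Filter.tendsto_id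
    have h2 : ∀ a : ℝ, (∫ x in a..(0:ℝ), k x) = K 0 - K a := by
      intro a
      rw [hK_def, ← intervalIntegral.integral_Iic_sub_Iic hkint.integrableOn hkint.integrableOn]
    have h3 : Filter.Tendsto (fun a : ℝ => K a) Filter.atBot (nhds 0) := by
      have h4 : Filter.Tendsto (fun a : ℝ => K 0 - (K 0 - K a)) Filter.atBot
          (nhds (K 0 - K 0)) := by
        apply Filter.Tendsto.sub tendsto_const_nhds
        simp only [← h2]
        exact h1
      simpa using h4
    exact (h3.eventually_lt_const hc).exists
  have hC1 : 1 ≤ C := by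
    rw [hC_def]
    nlinarith [Real.exp_pos (2 * Kinf)]
  clear_value Kinf A C K I
  -- main case split on Kinf
  rcases eq_or_lt_of_le hKinf0 with hKz | hKpos
  · -- Kinf = 0
    have hKx : ∀ x, K x = 0 := fun x => le_antisymm ((hK_le x).trans hKz.ge) (hK_nonneg x)
    have hΩA : ∀ x, Ω x ≤ A := by
      intro x
      have h1 := hyp' x
      have h2 := hIK x
      rw [hKx x, mul_zero] at h2
      linarith
    have hSA : S ≤ A := hS ▸ ciSup_le hΩA
    nlinarith [hSA, hA0, hC1]
  · -- 0 < Kinf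
    obtain ⟨n, hn0, hnK, hnK2⟩ :
        ∃ n : ℕ, 0 < (n:ℝ) ∧ 4 * Kinf ≤ (n:ℝ) ∧ 4 * Kinf ^ 2 ≤ (n:ℝ) := by
      refine ⟨⌈4 * Kinf ^ 2 + 4 * Kinf⌉₊, ?_, ?_, ?_⟩
      · have h : (0:ℝ) < 4 * Kinf ^ 2 + 4 * Kinf := by nlinarith
        exact_mod_cast Nat.ceil_pos.mpr h
      · nlinarith [Nat.le_ceil (4 * Kinf ^ 2 + 4 * Kinf)]
      · nlinarith [Nat.le_ceil (4 * Kinf ^ 2 + 4 * Kinf)]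
    obtain ⟨t, ht0, htn⟩ : ∃ t : ℝ, 0 < t ∧ (n:ℝ) * t = Kinf :=
      ⟨Kinf / n, div_pos hKpos hn0, by field_simp⟩
    have h2t : 2 * t ≤ 1 / 2 := by nlinarith [htn, hnK, hn0, ht0]
    have h12t : 0 < 1 - 2 * t := by linarith
    have h8t : 8 * (Kinf * t) ≤ 2 := by
      nlinarith [htn, hnK2, hn0, ht0, mul_pos hn0 ht0]
    obtain ⟨r, hr0, hr_id, hr_exp⟩ :
        ∃ r : ℝ, 0 < r ∧ r * (1 - 2 * t) = 1 ∧
          r ≤ Real.exp (2 * t + 2 * (2 * t) ^ 2) :=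
      ⟨(1 - 2 * t)⁻¹, inv_pos.mpr h12t, inv_mul_cancel₀ (ne_of_gt h12t),
        aux_inv_one_sub_le_exp (by linarith) h2t⟩
    have hr1 : 1 ≤ r := by nlinarith [hr_id, mul_nonneg hr0.le ht0.le]
    -- the key induction
    have claim : ∀ i : ℕ, ∀ x : ℝ, K x ≤ i * t → I x ≤ A * (r ^ i - 1) / 2 := by
      intro i
      induction i with
      | zero =>
        intro x hx
        have hKx : K x = 0 := le_antisymm (by simpa using hx) (hK_nonneg x)
        have h1 := hIK x
        rw [hKx, mul_zero] at h1
        simp only [pow_zero]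
        linarith
      | succ i ih =>
        intro x hx
        by_cases hcase : K x ≤ i * t
        · have h1 := ih x hcase
          have h2 : r ^ i ≤ r ^ (i + 1) := by
            rw [pow_succ]
            nlinarith [pow_pos hr0 i]
          nlinarith
        · push_neg at hcase
          push_cast at hx
          -- find a point x' ≤ x with K x' ≤ i*t and K x - K x' ≤ t, I x' controlled
          rcases Nat.eq_zero_or_pos i with hi0 | hipos
          · -- i = 0 : epsilon argument
            subst hi0
            simp only [Nat.cast_zero, zero_mul] at hcase
            have key : ∀ ε : ℝ, 0 < ε → I x * (1 - 2 * t) ≤ A * t + ε := by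
              intro ε hε
              obtain ⟨y, hy⟩ := hKbot (ε / (S + 1)) (by positivity)
              set x' : ℝ := min y x with hx'_def
              have hx'x : x' ≤ x := min_le_right _ _
              have hKx' : K x' < ε / (S + 1) := lt_of_le_of_lt (hK_mono (min_le_left _ _)) hy
              have h1 := hsplit x' x hx'x
              have h2 := hIK x'
              have h3 : Ω x' * K x' ≤ ε := by
                have hb : Ω x' * K x' ≤ S * (ε / (S + 1)) :=
                  mul_le_mul (hΩS x') hKx'.le (hK_nonneg x') hS0
                have hc : S * (ε / (S + 1)) ≤ ε := by
                  rw [mul_div_assoc', div_le_iff₀ (by positivity : (0:ℝ) < S + 1)]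
                  nlinarith
                linarith
              have h4 : Ω x * (K x - K x') ≤ (A + 2 * I x) * t := by
                apply mul_le_mul (hyp' x) _ (sub_nonneg.2 (hK_mono hx'x))
                  (by linarith [hI_nonneg x])
                have := hK_nonneg x'
                simp only [Nat.cast_zero, zero_add, one_mul] at hx
                linarith
              linarith
            have hfin : I x * (1 - 2 * t) ≤ A * t := by
              by_contra hcon
              push_neg at hcon
              have := key ((I x * (1 - 2 * t) - A * t) / 2) (by linarith)
              linarith
            -- conclude I x ≤ A * (r^1 - 1) / 2
            have h6 : r * (I x * (1 - 2 * t)) ≤ r * (A * t) :=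
              mul_le_mul_of_nonneg_left hfin hr0.le
            have h7 : r * (I x * (1 - 2 * t)) = I x := by
              linear_combination I x * hr_id
            have h8 : r * (A * t) = A * (r ^ (0 + 1) - 1) / 2 := by
              simp only [zero_add, pow_one]
              linear_combination (-(A / 2)) * hr_id
            linarith
          · -- i ≥ 1 : intermediate value theorem
            have hit_pos : 0 < (i : ℝ) * t := by
              have : (0:ℝ) < i := by exact_mod_cast hipos
              positivity
            obtain ⟨y, hy⟩ := hKbot ((i : ℝ) * t) hit_pos
            have hyx : y ≤ x := by
              by_contra h
              push_neg at h
              exact absurd (hK_mono h.le) (by linarith)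
            have hmem : (i : ℝ) * t ∈ Set.Icc (K y) (K x) := ⟨hy.le, hcase.le⟩
            obtain ⟨x', hx'mem, hKx'⟩ :=
              intermediate_value_Icc hyx hKcont.continuousOn hmem
            have hx'x : x' ≤ x := hx'mem.2
            have h1 := hsplit x' x hx'x
            have h2 : I x' ≤ A * (r ^ i - 1) / 2 := ih x' (le_of_eq hKx')
            have h3 : K x - K x' ≤ t := by rw [hKx']; linarith
            have h4 : Ω x * (K x - K x') ≤ (A + 2 * I x) * t :=
              mul_le_mul (hyp' x) h3 (sub_nonneg.2 (hK_mono hx'x))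
                (by linarith [hI_nonneg x])
            have h5 : I x * (1 - 2 * t) ≤ A * (r ^ i - 1) / 2 + A * t := by nlinarith
            have h6 : r * (I x * (1 - 2 * t)) ≤ r * (A * (r ^ i - 1) / 2 + A * t) :=
              mul_le_mul_of_nonneg_left h5 hr0.le
            have h7 : r * (I x * (1 - 2 * t)) = I x := by
              linear_combination I x * hr_id
            have h8 : r * (A * (r ^ i - 1) / 2 + A * t) = A * (r ^ (i + 1) - 1) / 2 := by
              rw [pow_succ]
              linear_combination (-(A / 2)) * hr_id
            linarith
    -- apply the claim with i = n
    have hfinal : ∀ x, I x ≤ A * (r ^ n - 1) / 2 := fun x =>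
      claim n x (le_of_le_of_eq (hK_le x) htn.symm)
    have hΩle : ∀ x, Ω x ≤ A * r ^ n := by
      intro x
      have := hyp' x
      have := hfinal x
      linarith
    -- bound r^n
    have hrn : r ^ n ≤ 8 * Real.exp (2 * Kinf) := by
      have h2 : r ^ n ≤ Real.exp (2 * t + 2 * (2 * t) ^ 2) ^ n :=
        pow_le_pow_left₀ hr0.le hr_exp n
      rw [← Real.exp_nat_mul] at h2
      have hnt2 : (n:ℝ) * t ^ 2 = Kinf * t := by linear_combination t * htn
      have h3 : (n : ℝ) * (2 * t + 2 * (2 * t) ^ 2) ≤ 2 * Kinf + 2 := by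
        nlinarith [htn, hnt2, h8t]
      have h4 : Real.exp ((n : ℝ) * (2 * t + 2 * (2 * t) ^ 2)) ≤
          Real.exp (2 * Kinf + 2) := Real.exp_le_exp.2 h3
      have h5 : Real.exp (2 * Kinf + 2) = Real.exp (2 * Kinf) * Real.exp 2 :=
        Real.exp_add _ _
      have h6 : Real.exp 2 ≤ 8 := by
        have he1 : Real.exp 1 < 2.7182818286 := Real.exp_one_lt_d9
        have he2 : Real.exp 2 = Real.exp 1 * Real.exp 1 := by
          rw [← Real.exp_add]; norm_num
        nlinarith [Real.exp_pos 1]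
      nlinarith [Real.exp_pos (2 * Kinf)]
    rw [hC_def]
    rw [hS]
    apply ciSup_le
    intro x
    have h1 := hΩle x
    nlinarith [hA0, hrn, Real.exp_pos (2 * Kinf), pow_nonneg hr0.le n]
end

section
/- Let φ : ℝ → ℂ be measurable with K := ∫_ℝ |z|·|φ(z)| dz < ∞, and let j ∈ ℤ. Let q_∞, q_2 ∈ [2, ∞] satisfy 1/q_∞ + 1/q_2 = 1/2. Let g, f : ℝ × ℝ → ℂ be measurable, with g(·, t) differentiable in the first variable for each t, derivative denoted ∂_x g, and suppose A := ess sup_x (∫_ℝ |f(x,t)|^{q_2} dt)^{1/q_2} < ∞ and B := ∫_ℝ (∫_ℝ |∂_x g(x,t)|^{q_∞} dt)^{1/q_∞} dx < ∞ (with the usual essential-supremum interpretation when an exponent is ∞). Define h(x,t) = ∫_ℝ 2^j·φ(2^j(x−y))·(g(y,t) − g(x,t))·f(y,t) dy. Then ∫_ℝ (∫_ℝ |h(x,t)|² dt)^{1/2} dx ≤ 2^{−j}·K·A·B. -/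
open MeasureTheory Set Function intervalIntegral
open scoped ENNReal NNReal


noncomputable def mnorm (q : ℝ≥0∞) (w : ℝ → ℝ≥0∞) : ℝ≥0∞ :=
  if q = ∞ then essSup w (volume : Measure ℝ)
  else (∫⁻ t : ℝ, w t ^ q.toReal) ^ (1 / q.toReal)

lemma mnorm_two (w : ℝ → ℝ≥0∞) :
    mnorm 2 w = (∫⁻ t : ℝ, w t ^ (2:ℝ)) ^ (1/2 : ℝ) := by
  rw [mnorm, if_neg (by norm_num)]
  norm_num

lemma eLpNorm_eq_mnorm (q : ℝ≥0∞) (hq : q ≠ 0) (u : ℝ → ℂ) :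
    eLpNorm u q (volume : Measure ℝ) = mnorm q (fun t => (‖u t‖₊ : ℝ≥0∞)) := by
  rcases eq_or_ne q ∞ with rfl | hq'
  · rw [eLpNorm_exponent_top, mnorm, if_pos rfl]; rfl
  · rw [eLpNorm_eq_lintegral_rpow_enorm_toReal hq hq', mnorm, if_neg hq']; rfl

lemma mnorm_two_mono {w1 w2 : ℝ → ℝ≥0∞} (h : ∀ᵐ t : ℝ, w1 t ≤ w2 t) :
    mnorm 2 w1 ≤ mnorm 2 w2 := by
  rw [mnorm_two, mnorm_two]
  refine ENNReal.rpow_le_rpow ?_ (by norm_num)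
  exact lintegral_mono_ae (h.mono fun t ht => ENNReal.rpow_le_rpow ht (by norm_num))

lemma mnorm_two_const_mul (c : ℝ≥0∞) (hc : c ≠ ∞) (w : ℝ → ℝ≥0∞) :
    mnorm 2 (fun t => c * w t) = c * mnorm 2 w := by
  rw [mnorm_two, mnorm_two]
  simp_rw [ENNReal.mul_rpow_of_nonneg _ _ (by norm_num : (0:ℝ) ≤ 2)]
  rw [lintegral_const_mul' _ _ (ENNReal.rpow_ne_top_of_nonneg (by norm_num) hc),
    ENNReal.mul_rpow_of_nonneg _ _ (by norm_num : (0:ℝ) ≤ 1/2), ← ENNReal.rpow_mul]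
  norm_num

lemma sq_rpow (x : ℝ≥0∞) : x ^ (2:ℝ) = x * x := by
  rw [show (2:ℝ) = ((2:ℕ):ℝ) by norm_num, ENNReal.rpow_natCast, sq]

lemma minkowski_two {α : Type*} [MeasurableSpace α] (μ : Measure α) [SigmaFinite μ]
    (Ψ : α → ℝ → ℝ≥0∞) (hΨ : Measurable (Function.uncurry Ψ)) :
    mnorm 2 (fun t => ∫⁻ a, Ψ a t ∂μ) ≤ ∫⁻ a, mnorm 2 (Ψ a) ∂μ := by
  have hm1 : ∀ t, Measurable fun a => Ψ a t := fun t =>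
    hΨ.comp (measurable_id.prodMk measurable_const)
  have hm2 : ∀ a, Measurable (Ψ a) := fun a =>
    hΨ.comp (measurable_const.prodMk measurable_id)
  have hN : Measurable fun a => mnorm 2 (Ψ a) := by
    simp_rw [mnorm_two]
    exact ((hΨ.pow_const (2:ℝ)).lintegral_prod_right').pow_const _
  set T := ∫⁻ a, mnorm 2 (Ψ a) ∂μ with hT
  have key : ∫⁻ t : ℝ, (∫⁻ a, Ψ a t ∂μ) ^ (2:ℝ) ≤ T ^ (2:ℝ) := by
    have h1 : ∫⁻ t : ℝ, (∫⁻ a, Ψ a t ∂μ) ^ (2:ℝ)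
        = ∫⁻ t : ℝ, ∫⁻ p : α × α, Ψ p.1 t * Ψ p.2 t ∂(μ.prod μ) := by
      refine lintegral_congr fun t => ?_
      rw [sq_rpow, ← lintegral_prod_mul (hm1 t).aemeasurable (hm1 t).aemeasurable]
    have hjm : Measurable (uncurry fun (t : ℝ) (p : α × α) => Ψ p.1 t * Ψ p.2 t) := by
      apply Measurable.mul
      · exact hΨ.comp ((measurable_snd.fst).prodMk measurable_fst)
      · exact hΨ.comp ((measurable_snd.snd).prodMk measurable_fst)
    have h2 : ∫⁻ t : ℝ, ∫⁻ p : α × α, Ψ p.1 t * Ψ p.2 t ∂(μ.prod μ)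
        = ∫⁻ p : α × α, ∫⁻ t : ℝ, Ψ p.1 t * Ψ p.2 t ∂(volume) ∂(μ.prod μ) :=
      lintegral_lintegral_swap hjm.aemeasurable
    have h3 : ∀ p : α × α, (∫⁻ t : ℝ, Ψ p.1 t * Ψ p.2 t)
        ≤ mnorm 2 (Ψ p.1) * mnorm 2 (Ψ p.2) := by
      intro p
      have := ENNReal.lintegral_mul_le_Lp_mul_Lq (volume : Measure ℝ)
        ((Real.holderConjugate_iff (p := 2) (q := 2)).mpr ⟨by norm_num, by norm_num⟩)
        (hm2 p.1).aemeasurable (hm2 p.2).aemeasurable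
      simpa [mnorm_two] using this
    have h4 : ∫⁻ p : α × α, mnorm 2 (Ψ p.1) * mnorm 2 (Ψ p.2) ∂(μ.prod μ) = T * T :=
      lintegral_prod_mul hN.aemeasurable hN.aemeasurable
    rw [h1, h2, sq_rpow, ← h4]
    exact lintegral_mono h3
  rw [mnorm_two]
  calc (∫⁻ t : ℝ, (∫⁻ a, Ψ a t ∂μ) ^ (2:ℝ)) ^ (1/2:ℝ)
      ≤ (T ^ (2:ℝ)) ^ (1/2:ℝ) := ENNReal.rpow_le_rpow key (by norm_num)
    _ = T := by rw [← ENNReal.rpow_mul]; norm_num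

-- bounded-factor case
lemma mnorm_two_mul_le_essSup (u v : ℝ → ℝ≥0∞) (hv : Measurable v) :
    mnorm 2 (fun t => u t * v t) ≤ essSup u (volume : Measure ℝ) * mnorm 2 v := by
  set E := essSup u (volume : Measure ℝ) with hE
  rcases eq_or_ne E ∞ with hEtop | hEtop
  · rcases eq_or_ne (mnorm 2 v) 0 with hv0 | hv0
    · have h2 : ∫⁻ t : ℝ, v t ^ (2:ℝ) = 0 := by
        rw [mnorm_two] at hv0
        have := ENNReal.rpow_eq_zero_iff.mp hv0
        rcases this with ⟨h, _⟩ | ⟨h, hneg⟩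
        · exact h
        · norm_num at hneg
      have hv0' : ∀ᵐ t : ℝ, v t ^ (2:ℝ) = 0 :=
        (lintegral_eq_zero_iff (hv.pow_const _)).mp h2
      have : ∀ᵐ t : ℝ, u t * v t = 0 := by
        filter_upwards [hv0'] with t ht
        have : v t = 0 := by
          rcases ENNReal.rpow_eq_zero_iff.mp ht with ⟨h, _⟩ | ⟨_, hneg⟩
          · exact h
          · norm_num at hneg
        simp [this]
      have hle : mnorm 2 (fun t => u t * v t) ≤ mnorm 2 (fun _ => (0:ℝ≥0∞)) :=
        mnorm_two_mono (this.mono fun t ht => le_of_eq ht)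
      have h0 : mnorm 2 (fun _ : ℝ => (0:ℝ≥0∞)) = 0 := by
        rw [mnorm_two]
        rw [show (∫⁻ _ : ℝ, (0:ℝ≥0∞) ^ (2:ℝ)) = 0 by
          simp [ENNReal.zero_rpow_of_pos (by norm_num : (0:ℝ) < 2)]]
        exact ENNReal.zero_rpow_of_pos (by norm_num)
      exact (hle.trans_eq h0).trans zero_le
    · rw [hEtop, ENNReal.top_mul hv0]; exact le_top
  · have hae : ∀ᵐ t : ℝ, u t * v t ≤ E * v t := by
      filter_upwards [ENNReal.ae_le_essSup u] with t ht
      exact mul_le_mul_left ht _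
    calc mnorm 2 (fun t => u t * v t) ≤ mnorm 2 (fun t => E * v t) := mnorm_two_mono hae
      _ = E * mnorm 2 v := mnorm_two_const_mul E hEtop v

lemma hoelder_two (q1 q2 : ℝ≥0∞) (hq1 : 2 ≤ q1) (hq2 : 2 ≤ q2) (hexp : 1/q1 + 1/q2 = 1/2)
    (u v : ℝ → ℝ≥0∞) (hu : Measurable u) (hv : Measurable v) :
    mnorm 2 (fun t => u t * v t) ≤ mnorm q1 u * mnorm q2 v := by
  have hq10 : q1 ≠ 0 := by intro h; rw [h] at hq1; simp at hq1
  have hq20 : q2 ≠ 0 := by intro h; rw [h] at hq2; simp at hq2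
  rcases eq_or_ne q1 ∞ with rfl | hq1top
  · have hq2' : q2 = 2 := by
      rw [one_div, one_div, one_div, ENNReal.inv_top, zero_add] at hexp
      exact inv_injective hexp
    subst hq2'
    have htop : mnorm ⊤ u = essSup u (volume : Measure ℝ) := by rw [mnorm, if_pos rfl]
    rw [htop]
    exact mnorm_two_mul_le_essSup u v hv
  rcases eq_or_ne q2 ∞ with rfl | hq2top
  · have hq1' : q1 = 2 := by
      rw [one_div, one_div, one_div, ENNReal.inv_top, add_zero] at hexp
      exact inv_injective hexp
    subst hq1'
    have htop : mnorm ⊤ v = essSup v (volume : Measure ℝ) := by rw [mnorm, if_pos rfl]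
    rw [htop]
    have : mnorm 2 (fun t => u t * v t) = mnorm 2 (fun t => v t * u t) := by
      simp_rw [mul_comm]
    rw [this, mul_comm]
    exact mnorm_two_mul_le_essSup v u hu
  -- both finite
  have hq1lt : 2 < q1 := by
    rcases lt_or_eq_of_le hq1 with h | h
    · exact h
    · exfalso
      rw [← h] at hexp
      have h2 : (1:ℝ≥0∞)/2 + 1/q2 = 1/2 + 0 := by rw [add_zero]; exact hexp
      have := (ENNReal.add_right_inj (by norm_num)).mp h2
      rw [one_div, ENNReal.inv_eq_zero] at this
      exact hq2top this
  have hq2lt : 2 < q2 := by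
    rcases lt_or_eq_of_le hq2 with h | h
    · exact h
    · exfalso
      rw [← h, add_comm] at hexp
      have h2 : (1:ℝ≥0∞)/2 + 1/q1 = 1/2 + 0 := by rw [add_zero]; exact hexp
      have := (ENNReal.add_right_inj (by norm_num)).mp h2
      rw [one_div, ENNReal.inv_eq_zero] at this
      exact hq1top this
  set r1 := q1.toReal with hr1def
  set r2 := q2.toReal with hr2def
  have hr1 : 2 < r1 := by
    have := (ENNReal.toReal_lt_toReal (by norm_num : (2:ℝ≥0∞) ≠ ∞) hq1top).mpr hq1lt
    simpa using this
  have hr2 : 2 < r2 := by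
    have := (ENNReal.toReal_lt_toReal (by norm_num : (2:ℝ≥0∞) ≠ ∞) hq2top).mpr hq2lt
    simpa using this
  have hsum : 1/r1 + 1/r2 = 1/2 := by
    have := congrArg ENNReal.toReal hexp
    rw [ENNReal.toReal_add (by simp [one_div, ENNReal.inv_ne_top, hq10])
        (by simp [one_div, ENNReal.inv_ne_top, hq20])] at this
    simpa [one_div, ENNReal.toReal_inv] using this
  have hr10 : r1 ≠ 0 := by positivity
  have hr20 : r2 ≠ 0 := by positivity
  set p := r1/2 with hp
  set q := r2/2 with hq
  have hpq : Real.HolderConjugate p q := by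
    rw [Real.holderConjugate_iff]
    constructor
    · rw [hp]; linarith
    · rw [hp, hq]
      have : (r1/2)⁻¹ + (r2/2)⁻¹ = 2 * (1/r1 + 1/r2) := by
        field_simp
      rw [this, hsum]; norm_num
  have key := ENNReal.lintegral_mul_le_Lp_mul_Lq (volume : Measure ℝ) hpq
    (hu.pow_const (2:ℝ)).aemeasurable (hv.pow_const (2:ℝ)).aemeasurable
  have hup : ∀ t : ℝ, (u t ^ (2:ℝ)) ^ p = u t ^ r1 := by
    intro t; rw [← ENNReal.rpow_mul]; congr 1; rw [hp]; ring
  have hvq : ∀ t : ℝ, (v t ^ (2:ℝ)) ^ q = v t ^ r2 := by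
    intro t; rw [← ENNReal.rpow_mul]; congr 1; rw [hq]; ring
  have key2 : ∫⁻ t : ℝ, (u t * v t) ^ (2:ℝ)
      ≤ (∫⁻ t : ℝ, u t ^ r1) ^ (1/p) * (∫⁻ t : ℝ, v t ^ r2) ^ (1/q) := by
    calc ∫⁻ t : ℝ, (u t * v t) ^ (2:ℝ)
        = ∫⁻ t : ℝ, (fun s => u s ^ (2:ℝ)) t * (fun s => v s ^ (2:ℝ)) t := by
          refine lintegral_congr fun t => ?_
          exact ENNReal.mul_rpow_of_nonneg _ _ (by norm_num)
      _ ≤ (∫⁻ t : ℝ, (u t ^ (2:ℝ)) ^ p) ^ (1/p) * (∫⁻ t : ℝ, (v t ^ (2:ℝ)) ^ q) ^ (1/q) := key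
      _ = (∫⁻ t : ℝ, u t ^ r1) ^ (1/p) * (∫⁻ t : ℝ, v t ^ r2) ^ (1/q) := by
          simp_rw [hup, hvq]
  rw [mnorm_two, mnorm, if_neg hq1top, mnorm, if_neg hq2top, ← hr1def, ← hr2def]
  calc (∫⁻ t : ℝ, (u t * v t) ^ (2:ℝ)) ^ (1/2:ℝ)
      ≤ ((∫⁻ t : ℝ, u t ^ r1) ^ (1/p) * (∫⁻ t : ℝ, v t ^ r2) ^ (1/q)) ^ (1/2:ℝ) :=
        ENNReal.rpow_le_rpow key2 (by norm_num)
    _ = (∫⁻ t : ℝ, u t ^ r1) ^ (1/r1) * (∫⁻ t : ℝ, v t ^ r2) ^ (1/r2) := by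
        rw [ENNReal.mul_rpow_of_nonneg _ _ (by norm_num : (0:ℝ) ≤ 1/2),
          ← ENNReal.rpow_mul, ← ENNReal.rpow_mul]
        congr 1
        · congr 1; rw [hp]; field_simp
        · congr 1; rw [hq]; field_simp


noncomputable def indE (x y s : ℝ) : ℝ≥0∞ := (Set.uIoc x y).indicator 1 s

lemma indE_mem (x y s : ℝ) :
    indE x y s = if min x y < s ∧ s ≤ max x y then 1 else 0 := by
  simp only [indE, Set.indicator_apply, Set.uIoc, Set.mem_Ioc,
    Pi.one_apply]

lemma measurable_indE_s (x y : ℝ) : Measurable (fun s => indE x y s) :=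
  measurable_const.indicator measurableSet_uIoc

lemma lintegral_indE (ν : Measure ℝ) (x y : ℝ) :
    ∫⁻ s, indE x y s ∂ν = ν (Set.uIoc x y) := by
  simp only [indE]
  rw [lintegral_indicator_one measurableSet_uIoc]

lemma measurable_indE_xys :
    Measurable (fun p : (ℝ × ℝ) × ℝ => indE p.1.1 p.1.2 p.2) := by
  have heq : (fun p : (ℝ × ℝ) × ℝ => indE p.1.1 p.1.2 p.2)
      = Set.indicator {p : (ℝ × ℝ) × ℝ | min p.1.1 p.1.2 < p.2 ∧ p.2 ≤ max p.1.1 p.1.2}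
        (fun _ => (1:ℝ≥0∞)) := by
    funext p
    rw [indE_mem, Set.indicator_apply]
    rfl
  rw [heq]
  refine measurable_const.indicator ?_
  refine MeasurableSet.inter ?_ ?_
  · exact measurableSet_lt ((measurable_fst.fst).min (measurable_fst.snd)) measurable_snd
  · exact measurableSet_le measurable_snd ((measurable_fst.fst).max (measurable_fst.snd))

lemma measurable_indE_x (u s : ℝ) : Measurable fun x : ℝ => indE x (x - u) s :=
  measurable_indE_xys.comp
    ((measurable_id.prodMk (measurable_id.sub measurable_const)).prodMk measurable_const)

lemma measurable_indE_u (x s : ℝ) : Measurable fun u : ℝ => indE x (x - u) s :=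
  measurable_indE_xys.comp
    ((measurable_const.prodMk (measurable_const.sub measurable_id)).prodMk measurable_const)

lemma lintegral_indE_x (u s : ℝ) :
    ∫⁻ x : ℝ, indE x (x - u) s = ENNReal.ofReal |u| := by
  rcases le_or_gt 0 u with hu | hu
  · have hset : ∀ x : ℝ, indE x (x - u) s = (Set.Ico s (s + u)).indicator 1 x := by
      intro x
      have hmin : min x (x - u) = x - u := min_eq_right (by linarith)
      have hmax : max x (x - u) = x := max_eq_left (by linarith)
      have hiff : (min x (x - u) < s ∧ s ≤ max x (x - u)) ↔ x ∈ Set.Ico s (s + u) := by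
        rw [hmin, hmax, Set.mem_Ico]
        constructor
        · rintro ⟨h1, h2⟩; exact ⟨h2, by linarith⟩
        · rintro ⟨h1, h2⟩; exact ⟨by linarith, h1⟩
      rw [indE_mem, Set.indicator_apply]
      simp only [Pi.one_apply]
      exact if_congr hiff rfl rfl
    simp_rw [hset]
    rw [lintegral_indicator_one measurableSet_Ico, Real.volume_Ico, abs_of_nonneg hu]
    congr 1; ring
  · have hset : ∀ x : ℝ, indE x (x - u) s = (Set.Ico (s + u) s).indicator 1 x := by
      intro x
      have hmin : min x (x - u) = x := min_eq_left (by linarith)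
      have hmax : max x (x - u) = x - u := max_eq_right (by linarith)
      have hiff : (min x (x - u) < s ∧ s ≤ max x (x - u)) ↔ x ∈ Set.Ico (s + u) s := by
        rw [hmin, hmax, Set.mem_Ico]
        constructor
        · rintro ⟨h1, h2⟩; exact ⟨by linarith, h1⟩
        · rintro ⟨h1, h2⟩; exact ⟨h2, by linarith⟩
      rw [indE_mem, Set.indicator_apply]
      simp only [Pi.one_apply]
      exact if_congr hiff rfl rfl
    simp_rw [hset]
    rw [lintegral_indicator_one measurableSet_Ico, Real.volume_Ico, abs_of_neg hu]
    congr 1; ring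

lemma kernel_bound (ν : Measure ℝ) [IsFiniteMeasure ν] (Φ : ℝ → ℝ≥0∞) (hΦ : Measurable Φ) :
    (∫⁻ x : ℝ, ∫⁻ y : ℝ, Φ (x - y) * ν (Set.uIoc x y))
      ≤ (∫⁻ u : ℝ, Φ u * ENNReal.ofReal |u|) * ν Set.univ := by
  have step1 : ∀ x : ℝ, (∫⁻ y : ℝ, Φ (x - y) * ν (Set.uIoc x y))
      = ∫⁻ s : ℝ, (∫⁻ y : ℝ, Φ (x - y) * indE x y s) ∂ν := by
    intro x
    have hpt : ∀ y : ℝ, Φ (x - y) * ν (Set.uIoc x y) = ∫⁻ s, Φ (x - y) * indE x y s ∂ν := by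
      intro y
      rw [lintegral_const_mul _ (measurable_indE_s x y), lintegral_indE]
    simp_rw [hpt]
    refine lintegral_lintegral_swap (Measurable.aemeasurable ?_)
    apply Measurable.mul
    · exact hΦ.comp (measurable_const.sub measurable_fst)
    · exact measurable_indE_xys.comp
        (((measurable_const : Measurable fun _ : ℝ × ℝ => x).prodMk
          measurable_fst).prodMk measurable_snd)
  simp_rw [step1]
  have hinner : Measurable (fun p : ℝ × ℝ => ∫⁻ y : ℝ, Φ (p.1 - y) * indE p.1 y p.2) := by
    refine Measurable.lintegral_prod_right' (f := fun (p : (ℝ × ℝ) × ℝ) =>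
      Φ (p.1.1 - p.2) * indE p.1.1 p.2 p.1.2) ?_
    apply Measurable.mul
    · exact hΦ.comp (measurable_fst.fst.sub measurable_snd)
    · exact measurable_indE_xys.comp
        ((measurable_fst.fst.prodMk measurable_snd).prodMk measurable_fst.snd)
  rw [lintegral_lintegral_swap hinner.aemeasurable]
  have key : ∀ s : ℝ, (∫⁻ x : ℝ, ∫⁻ y : ℝ, Φ (x - y) * indE x y s)
      = ∫⁻ u : ℝ, Φ u * ENNReal.ofReal |u| := by
    intro s
    have hcv : ∀ x : ℝ, (∫⁻ y : ℝ, Φ (x - y) * indE x y s)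
        = ∫⁻ u : ℝ, Φ u * indE x (x - u) s := by
      intro x
      set f1 : ℝ → ℝ≥0∞ := fun u => Φ u * indE x (x - u) s with hf1def
      have hf1 : Measurable f1 := hΦ.mul (measurable_indE_u x s)
      have heq : ∀ y : ℝ, Φ (x - y) * indE x y s = f1 (x + (- y)) := by
        intro y
        rw [hf1def]
        simp only [← sub_eq_add_neg]
        rw [sub_sub_cancel]
      simp_rw [heq]
      have h1 : (∫⁻ y : ℝ, (fun z => f1 (x + z)) (-y)) = ∫⁻ y : ℝ, f1 (x + y) :=
        (Measure.measurePreserving_neg (volume : Measure ℝ)).lintegral_comp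
          (hf1.comp (measurable_const.add measurable_id))
      have h2 : (∫⁻ y : ℝ, f1 (x + y)) = ∫⁻ u : ℝ, f1 u :=
        lintegral_add_left_eq_self f1 x
      calc ∫⁻ y : ℝ, f1 (x + (-y)) = ∫⁻ y : ℝ, f1 (x + y) := h1
        _ = ∫⁻ u : ℝ, f1 u := h2
    simp_rw [hcv]
    have hswap : Measurable (uncurry fun (x u : ℝ) => Φ u * indE x (x - u) s) := by
      apply Measurable.mul
      · exact hΦ.comp measurable_snd
      · exact measurable_indE_xys.comp
          ((measurable_fst.prodMk (measurable_fst.sub measurable_snd)).prodMk measurable_const)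
    rw [lintegral_lintegral_swap hswap.aemeasurable]
    refine lintegral_congr fun u => ?_
    rw [lintegral_const_mul _ (measurable_indE_x u s), lintegral_indE_x]
  simp_rw [key]
  rw [lintegral_const]


lemma ftc_bound (w w' : ℝ → ℂ) (hw : ∀ x : ℝ, HasDerivAt w (w' x) x)
    (hw'm : Measurable w') (x y : ℝ) :
    (‖w y - w x‖₊ : ℝ≥0∞) ≤ ∫⁻ s : ℝ, (Set.uIoc x y).indicator (fun s => (‖w' s‖₊ : ℝ≥0∞)) s := by
  rw [lintegral_indicator measurableSet_uIoc]
  by_cases hI : (∫⁻ s in Set.uIoc x y, (‖w' s‖₊ : ℝ≥0∞)) = ∞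
  · rw [hI]; exact le_top
  · have hint : IntervalIntegrable w' volume x y := by
      rw [intervalIntegrable_iff]
      constructor
      · exact hw'm.aestronglyMeasurable
      · exact lt_top_iff_ne_top.mpr hI
    have heq : ∫ s in x..y, w' s = w y - w x :=
      integral_eq_sub_of_hasDerivAt (fun s _ => hw s) hint
    rw [← heq]
    rcases le_total x y with hxy | hxy
    · rw [integral_of_le hxy, Set.uIoc_of_le hxy]
      exact enorm_integral_le_lintegral_enorm _
    · rw [integral_symm y x, integral_of_le hxy, Set.uIoc_comm, Set.uIoc_of_le hxy]
      rw [nnnorm_neg]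
      exact enorm_integral_le_lintegral_enorm _


lemma ofReal_two_zpow (m : ℤ) : ENNReal.ofReal ((2:ℝ) ^ m) = (2:ℝ≥0∞) ^ m := by
  rcases m with n | n
  · simp only [Int.ofNat_eq_coe, zpow_natCast]
    rw [ENNReal.ofReal_pow (by norm_num)]
    norm_num
  · simp only [zpow_negSucc]
    rw [ENNReal.ofReal_inv_of_pos (by positivity), ENNReal.ofReal_pow (by norm_num)]
    norm_num

lemma scale_calc (φ : ℝ → ℂ) (hφm : Measurable φ)
    (hK : Integrable (fun z : ℝ => |z| * ‖φ z‖)) (j : ℤ) :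
    (∫⁻ u : ℝ, (ENNReal.ofReal ((2:ℝ)^j) * (‖φ ((2:ℝ)^j * u)‖₊ : ℝ≥0∞)) * ENNReal.ofReal |u|)
      = (2:ℝ≥0∞)^(-j) * ENNReal.ofReal (∫ z : ℝ, |z| * ‖φ z‖) := by
  set c : ℝ := (2:ℝ)^j with hcdef
  have hc : 0 < c := by positivity
  set Θ : ℝ → ℝ≥0∞ := fun z => (‖φ z‖₊ : ℝ≥0∞) * ENNReal.ofReal |z| * ENNReal.ofReal c⁻¹
    with hΘdef
  have hΘ : Measurable Θ := by
    exact ((hφm.enorm).mul (ENNReal.measurable_ofReal.comp (_root_.measurable_abs))).mul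
      measurable_const
  have claim1 : ∀ u : ℝ, (ENNReal.ofReal c * (‖φ (c * u)‖₊ : ℝ≥0∞)) * ENNReal.ofReal |u|
      = ENNReal.ofReal c * Θ (c * u) := by
    intro u
    rw [hΘdef]
    have habs : ENNReal.ofReal |c * u| * ENNReal.ofReal c⁻¹ = ENNReal.ofReal |u| := by
      rw [← ENNReal.ofReal_mul (abs_nonneg _), abs_mul, abs_of_pos hc]
      congr 1
      field_simp
    calc (ENNReal.ofReal c * (‖φ (c * u)‖₊ : ℝ≥0∞)) * ENNReal.ofReal |u|
        = ENNReal.ofReal c * ((‖φ (c * u)‖₊ : ℝ≥0∞) * (ENNReal.ofReal |c * u| * ENNReal.ofReal c⁻¹)) := by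
          rw [habs]; ring
      _ = ENNReal.ofReal c * Θ (c * u) := by rw [hΘdef]; ring_nf
  simp_rw [claim1]
  rw [lintegral_const_mul' _ _ ENNReal.ofReal_ne_top]
  have hmap : (∫⁻ u : ℝ, Θ (c * u)) = ENNReal.ofReal |c⁻¹| * ∫⁻ z : ℝ, Θ z := by
    have h1 : (∫⁻ u : ℝ, Θ (c * u)) = ∫⁻ z : ℝ, Θ z ∂(Measure.map (c * ·) volume) :=
      (lintegral_map hΘ (measurable_const_mul c)).symm
    rw [h1, Real.map_volume_mul_left (ne_of_gt hc), lintegral_smul_measure, smul_eq_mul]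
  rw [hmap]
  have hL : (∫⁻ z : ℝ, Θ z) = ENNReal.ofReal (∫ z : ℝ, |z| * ‖φ z‖) * ENNReal.ofReal c⁻¹ := by
    rw [hΘdef]
    rw [lintegral_mul_const' _ _ ENNReal.ofReal_ne_top]
    congr 1
    rw [ofReal_integral_eq_lintegral_ofReal hK
      (Filter.Eventually.of_forall fun z => by positivity)]
    refine lintegral_congr fun z => ?_
    rw [ENNReal.ofReal_mul (abs_nonneg _), ofReal_norm_eq_enorm, enorm_eq_nnnorm]
    ring
  rw [hL]
  have hinv : ENNReal.ofReal c * (ENNReal.ofReal |c⁻¹| *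
      (ENNReal.ofReal (∫ z : ℝ, |z| * ‖φ z‖) * ENNReal.ofReal c⁻¹))
      = (ENNReal.ofReal c * ENNReal.ofReal c⁻¹ * ENNReal.ofReal |c⁻¹|) *
        ENNReal.ofReal (∫ z : ℝ, |z| * ‖φ z‖) := by ring
  rw [hinv, ← ENNReal.ofReal_mul (le_of_lt hc), mul_inv_cancel₀ (ne_of_gt hc),
    ENNReal.ofReal_one, one_mul, abs_of_pos (inv_pos.mpr hc)]
  congr 1
  rw [hcdef, ← zpow_neg, ofReal_two_zpow]
/-- Commutator estimate (case `(p₁, p_∞) = (1, ∞)` of the commutator lemma):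
the commutator `h = [Δ_j, g] f`, where `Δ_j` is convolution with `2^j φ(2^j ·)`,
satisfies `‖h‖_{L¹_x(L²_t)} ≤ 2^{-j} K A B` with `K = ∫ |z||φ(z)| dz`,
`A = ‖f‖_{L^∞_x(L^{q₂}_t)}` and `B = ‖∂_x g‖_{L¹_x(L^{q_∞}_t)}`,
for exponents `1/q_∞ + 1/q₂ = 1/2`, `q_∞, q₂ ∈ [2, ∞]`. -/
theorem commutator_L1L2_estimate (φ : ℝ → ℂ) (hφm : Measurable φ)
    (hK : Integrable (fun z : ℝ => |z| * ‖φ z‖))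
    (j : ℤ) (qinf q2 : ℝ≥0∞) (hqinf : 2 ≤ qinf) (hq2 : 2 ≤ q2)
    (hexp : 1 / qinf + 1 / q2 = 1 / 2)
    (g f g' : ℝ → ℝ → ℂ)
    (hg' : ∀ (t x : ℝ), HasDerivAt (fun x' : ℝ => g x' t) (g' x t) x)
    (hfm : Measurable (Function.uncurry f))
    (hgm : Measurable (Function.uncurry g'))
    (hA : essSup (fun x : ℝ => eLpNorm (f x) q2 (volume : Measure ℝ)) (volume : Measure ℝ) < ⊤)
    (hB : (∫⁻ x : ℝ, eLpNorm (g' x) qinf (volume : Measure ℝ)) < ⊤)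
    (h : ℝ → ℝ → ℂ)
    (hdef : ∀ x t : ℝ, h x t =
      ∫ y : ℝ, (2 : ℝ) ^ j • (φ ((2 : ℝ) ^ j * (x - y)) * (g y t - g x t) * f y t)) :
    (∫⁻ x : ℝ, eLpNorm (h x) 2 (volume : Measure ℝ))
      ≤ (2 : ℝ≥0∞) ^ (-j) * ENNReal.ofReal (∫ z : ℝ, |z| * ‖φ z‖)
        * essSup (fun x : ℝ => eLpNorm (f x) q2 (volume : Measure ℝ)) (volume : Measure ℝ)
        * ∫⁻ x : ℝ, eLpNorm (g' x) qinf (volume : Measure ℝ) := by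
  classical
  set A' : ℝ≥0∞ :=
    essSup (fun x : ℝ => eLpNorm (f x) q2 (volume : Measure ℝ)) (volume : Measure ℝ) with hA'def
  set Cf : ℝ → ℝ≥0∞ := fun s => eLpNorm (g' s) qinf (volume : Measure ℝ) with hCfdef
  set ν : Measure ℝ := (volume : Measure ℝ).withDensity Cf with hνdef
  have hνuniv : ν Set.univ = ∫⁻ x : ℝ, Cf x := by
    rw [hνdef, withDensity_apply _ MeasurableSet.univ, Measure.restrict_univ]
  haveI : IsFiniteMeasure ν := ⟨by rw [hνuniv]; exact hB⟩
  have hν_uIoc : ∀ x y : ℝ, ν (Set.uIoc x y) = ∫⁻ s : ℝ, indE x y s * Cf s := by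
    intro x y
    rw [hνdef, withDensity_apply _ measurableSet_uIoc, ← lintegral_indicator measurableSet_uIoc]
    refine lintegral_congr fun s => ?_
    by_cases hs : s ∈ Set.uIoc x y <;> simp [indE, Set.indicator_apply, hs]
  -- abbreviations
  set c : ℝ := (2:ℝ)^j with hcdef
  have hc : 0 < c := by positivity
  set Φf : ℝ → ℝ≥0∞ := fun u => ENNReal.ofReal c * (‖φ (c * u)‖₊ : ℝ≥0∞) with hΦfdef
  have hΦf : Measurable Φf := measurable_const.mul ((hφm.comp (measurable_const_mul c)).enorm)
  have hΦffin : ∀ u, Φf u ≠ ∞ := fun u =>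
    ENNReal.mul_ne_top ENNReal.ofReal_ne_top ENNReal.coe_ne_top
  set Fm : ℝ → ℝ → ℝ≥0∞ := fun y t => (‖f y t‖₊ : ℝ≥0∞) with hFmdef
  set Gm : ℝ → ℝ → ℝ≥0∞ := fun s t => (‖g' s t‖₊ : ℝ≥0∞) with hGmdef
  have hGt : ∀ t : ℝ, Measurable fun s : ℝ => g' s t := fun t =>
    hgm.comp (measurable_id.prodMk measurable_const)
  have hGs : ∀ s : ℝ, Measurable (Gm s) := fun s =>
    (hgm.comp (measurable_const.prodMk measurable_id)).enorm
  have hFy : ∀ y : ℝ, Measurable (Fm y) := fun y =>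
    (hfm.comp (measurable_const.prodMk measurable_id)).enorm
  have indE_ne_top : ∀ x y s : ℝ, indE x y s ≠ ∞ := by
    intro x y s
    rw [indE_mem]
    split <;> simp
  -- Step A : pointwise bound on ‖h x t‖
  have stepA : ∀ x t : ℝ, ((‖h x t‖₊ : ℝ≥0∞))
      ≤ ∫⁻ y : ℝ, Φf (x - y) * (∫⁻ s : ℝ, indE x y s * Gm s t) * Fm y t := by
    intro x t
    rw [hdef x t]
    refine le_trans (enorm_integral_le_lintegral_enorm _) (lintegral_mono fun y => ?_)
    have h1 : ((‖(2:ℝ)^j • (φ ((2:ℝ)^j * (x - y)) * (g y t - g x t) * f y t)‖₊ : ℝ≥0∞))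
        = Φf (x - y) * (‖g y t - g x t‖₊ : ℝ≥0∞) * Fm y t := by
      rw [nnnorm_smul, nnnorm_mul, nnnorm_mul]
      push_cast
      rw [show ((‖(2:ℝ)^j‖₊ : ℝ≥0∞)) = ENNReal.ofReal c by
        exact Real.enorm_eq_ofReal (le_of_lt hc)]
      rw [hΦfdef, hFmdef, ← hcdef]
      ring
    refine (le_of_eq h1).trans ?_
    refine mul_le_mul' (mul_le_mul' le_rfl ?_) le_rfl
    have hftc := ftc_bound (fun x' => g x' t) (fun x' => g' x' t)
      (fun x' => hg' t x') (hGt t) x y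
    refine le_trans hftc (le_of_eq (lintegral_congr fun s => ?_))
    by_cases hs : s ∈ Set.uIoc x y <;> simp [indE, Set.indicator_apply, hs, hGmdef]
  -- a.e. bound for f slices
  have haef : ∀ᵐ y : ℝ, eLpNorm (f y) q2 (volume : Measure ℝ) ≤ A' :=
    ENNReal.ae_le_essSup _
  -- Step B : bound for each x
  have stepB : ∀ x : ℝ, eLpNorm (h x) 2 (volume : Measure ℝ)
      ≤ (∫⁻ y : ℝ, Φf (x - y) * ν (Set.uIoc x y)) * A' := by
    intro x
    set Ψ : ℝ → ℝ → ℝ≥0∞ :=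
      fun y t => Φf (x - y) * (∫⁻ s : ℝ, indE x y s * Gm s t) * Fm y t with hΨdef
    have hΨ : Measurable (Function.uncurry Ψ) := by
      apply Measurable.mul
      · apply Measurable.mul
        · exact hΦf.comp (measurable_const.sub measurable_fst)
        · refine Measurable.lintegral_prod_right' (f := fun (q : (ℝ × ℝ) × ℝ) =>
            indE x q.1.1 q.2 * Gm q.2 q.1.2) ?_
          apply Measurable.mul
          · exact measurable_indE_xys.comp
              (((measurable_const : Measurable fun _ : (ℝ × ℝ) × ℝ => x).prodMk
                measurable_fst.fst).prodMk measurable_snd)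
          · exact (hgm.comp (measurable_snd.prodMk measurable_fst.snd)).enorm
      · exact (hfm.comp (measurable_fst.prodMk measurable_snd)).enorm
    have hb1 : eLpNorm (h x) 2 (volume : Measure ℝ) ≤ ∫⁻ y : ℝ, mnorm 2 (Ψ y) := by
      rw [eLpNorm_eq_mnorm 2 (by norm_num) (h x)]
      refine le_trans (mnorm_two_mono (Filter.Eventually.of_forall fun t => stepA x t)) ?_
      exact minkowski_two volume Ψ hΨ
    refine le_trans hb1 ?_
    have hb2 : ∀ᵐ y : ℝ, mnorm 2 (Ψ y) ≤ Φf (x - y) * (ν (Set.uIoc x y) * A') := by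
      filter_upwards [haef] with y hy
      have e1 : Ψ y = fun t => Φf (x - y) *
          ((∫⁻ s : ℝ, indE x y s * Gm s t) * Fm y t) := by
        funext t; rw [hΨdef]; ring
      rw [e1, mnorm_two_const_mul _ (hΦffin _)]
      refine mul_le_mul' le_rfl ?_
      have e2 : (fun t => (∫⁻ s : ℝ, indE x y s * Gm s t) * Fm y t)
          = fun t => ∫⁻ s : ℝ, indE x y s * Gm s t * Fm y t := by
        funext t
        exact (lintegral_mul_const' _ _ ENNReal.coe_ne_top).symm
      rw [e2]
      set Λ : ℝ → ℝ → ℝ≥0∞ := fun s t => indE x y s * Gm s t * Fm y t with hΛdef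
      have hΛ : Measurable (Function.uncurry Λ) := by
        apply Measurable.mul
        · apply Measurable.mul
          · exact (measurable_indE_s x y).comp measurable_fst
          · exact hgm.enorm
        · exact ((hfm.comp (measurable_const.prodMk measurable_id)).enorm).comp
            measurable_snd
      refine le_trans (minkowski_two volume Λ hΛ) ?_
      have hb3 : ∀ s : ℝ, mnorm 2 (Λ s) ≤ indE x y s * (Cf s * A') := by
        intro s
        have e3 : Λ s = fun t => indE x y s * (Gm s t * Fm y t) := by
          funext t; rw [hΛdef]; ring
        rw [e3, mnorm_two_const_mul _ (indE_ne_top x y s)]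
        refine mul_le_mul' le_rfl ?_
        refine le_trans (hoelder_two qinf q2 hqinf hq2 hexp (Gm s) (Fm y) (hGs s) (hFy y)) ?_
        rw [← eLpNorm_eq_mnorm qinf (by intro h0; rw [h0] at hqinf; simp at hqinf) (g' s),
          ← eLpNorm_eq_mnorm q2 (by intro h0; rw [h0] at hq2; simp at hq2) (f y)]
        exact mul_le_mul' le_rfl hy
      refine le_trans (lintegral_mono hb3) (le_of_eq ?_)
      have e4 : (fun s => indE x y s * (Cf s * A')) = fun s => indE x y s * Cf s * A' := by
        funext s; ring
      rw [e4, lintegral_mul_const' _ _ (ne_of_lt hA), hν_uIoc]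
    calc (∫⁻ y : ℝ, mnorm 2 (Ψ y)) ≤ ∫⁻ y : ℝ, Φf (x - y) * (ν (Set.uIoc x y) * A') :=
        lintegral_mono_ae hb2
      _ = (∫⁻ y : ℝ, Φf (x - y) * ν (Set.uIoc x y)) * A' := by
        simp_rw [← mul_assoc]
        exact lintegral_mul_const' _ _ (ne_of_lt hA)
  -- Step C : integrate in x and apply the kernel bound
  calc (∫⁻ x : ℝ, eLpNorm (h x) 2 (volume : Measure ℝ))
      ≤ ∫⁻ x : ℝ, (∫⁻ y : ℝ, Φf (x - y) * ν (Set.uIoc x y)) * A' := lintegral_mono stepB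
    _ = (∫⁻ x : ℝ, ∫⁻ y : ℝ, Φf (x - y) * ν (Set.uIoc x y)) * A' :=
        lintegral_mul_const' _ _ (ne_of_lt hA)
    _ ≤ ((∫⁻ u : ℝ, Φf u * ENNReal.ofReal |u|) * ν Set.univ) * A' :=
        mul_le_mul_left (kernel_bound ν Φf hΦf) A'
    _ = ((2:ℝ≥0∞)^(-j) * ENNReal.ofReal (∫ z : ℝ, |z| * ‖φ z‖)
          * (∫⁻ x : ℝ, eLpNorm (g' x) qinf (volume : Measure ℝ))) * A' := by
        rw [hνuniv]
        have := scale_calc φ hφm hK j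
        rw [hΦfdef, hcdef]
        rw [show (∫⁻ u : ℝ, (ENNReal.ofReal ((2:ℝ)^j) * (‖φ ((2:ℝ)^j * u)‖₊ : ℝ≥0∞))
            * ENNReal.ofReal |u|) = (2:ℝ≥0∞)^(-j) * ENNReal.ofReal (∫ z : ℝ, |z| * ‖φ z‖)
          from this]
    _ = (2:ℝ≥0∞)^(-j) * ENNReal.ofReal (∫ z : ℝ, |z| * ‖φ z‖) * A'
          * ∫⁻ x : ℝ, eLpNorm (g' x) qinf (volume : Measure ℝ) := by ring
end

section
/- Let 1 ≤ α < ∞ and 1 ≤ β < ∞, and set r = min(α, β). Let f_0, …, f_N : ℝ × ℝ → ℂ be measurable functions with pairwise disjoint supports in the second variable t, i.e. the sets T_k = { t ∈ ℝ : f_k(x,t) ≠ 0 for some x } are pairwise disjoint, and suppose each ‖f_k‖_{L^α_x(L^β_t)} := (∫_x (∫_t |f_k(x,t)|^β dt)^{α/β} dx)^{1/α} is finite. Then ‖Σ_{k=0}^{N} f_k‖_{L^α_x(L^β_t)} ≤ (Σ_{k=0}^{N} ‖f_k‖_{L^α_x(L^β_t)}^{r})^{1/r}. -/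
open MeasureTheory
open scoped ENNReal

private lemma lp_sum_le {ι : Type*} (s : Finset ι) {X : Type*} [MeasurableSpace X]
    (μ : Measure X) (g : ι → X → ℝ≥0∞) (hg : ∀ i, Measurable (g i)) {p : ℝ} (hp : 1 ≤ p) :
    (∫⁻ x, (∑ i ∈ s, g i x) ^ p ∂μ) ^ (1 / p) ≤
      ∑ i ∈ s, (∫⁻ x, g i x ^ p ∂μ) ^ (1 / p) := by
  have hp0 : 0 < p := lt_of_lt_of_le zero_lt_one hp
  induction s using Finset.cons_induction with
  | empty =>
      simp only [Finset.sum_empty]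
      rw [ENNReal.zero_rpow_of_pos hp0, lintegral_zero,
        ENNReal.zero_rpow_of_pos (by positivity)]
  | cons a s ha ih =>
      calc (∫⁻ x, (∑ i ∈ Finset.cons a s ha, g i x) ^ p ∂μ) ^ (1 / p)
          = (∫⁻ x, (g a + fun x => ∑ i ∈ s, g i x) x ^ p ∂μ) ^ (1 / p) := by
            simp [Finset.sum_cons]
        _ ≤ (∫⁻ x, g a x ^ p ∂μ) ^ (1 / p) +
              (∫⁻ x, (∑ i ∈ s, g i x) ^ p ∂μ) ^ (1 / p) :=
            ENNReal.lintegral_Lp_add_le (hg a).aemeasurable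
              (Finset.measurable_sum s fun i _ => hg i).aemeasurable hp
        _ ≤ (∫⁻ x, g a x ^ p ∂μ) ^ (1 / p) +
              ∑ i ∈ s, (∫⁻ x, g i x ^ p ∂μ) ^ (1 / p) := by gcongr
        _ = ∑ i ∈ Finset.cons a s ha, (∫⁻ x, g i x ^ p ∂μ) ^ (1 / p) := by
            rw [Finset.sum_cons]

private lemma rpow_sum_le_sum_rpow {ι : Type*} (s : Finset ι) (g : ι → ℝ≥0∞) {p : ℝ}
    (hp0 : 0 < p) (hp1 : p ≤ 1) :
    (∑ i ∈ s, g i) ^ p ≤ ∑ i ∈ s, g i ^ p := by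
  induction s using Finset.cons_induction with
  | empty => simp [ENNReal.zero_rpow_of_pos hp0]
  | cons a s ha ih =>
      rw [Finset.sum_cons, Finset.sum_cons]
      calc (g a + ∑ i ∈ s, g i) ^ p ≤ g a ^ p + (∑ i ∈ s, g i) ^ p :=
            ENNReal.rpow_add_le_add_rpow _ _ hp0.le hp1
        _ ≤ g a ^ p + ∑ i ∈ s, g i ^ p := by gcongr

/-- The mixed norm `‖u‖_{L^α_x(L^β_t)} = (∫_x (∫_t |u(x,t)|^β dt)^{α/β} dx)^{1/α}`,
as an `ℝ≥0∞`-valued quantity. -/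
noncomputable def mixedLpNorm (α β : ℝ) (u : ℝ → ℝ → ℂ) : ℝ≥0∞ :=
  (∫⁻ x : ℝ, (∫⁻ t : ℝ, (‖u x t‖₊ : ℝ≥0∞) ^ β) ^ (α / β)) ^ (1 / α)

/-- If `f_0, …, f_N` have pairwise disjoint supports in the `t` variable and finite
mixed norms, then `‖∑ f_k‖_{L^α_x(L^β_t)} ≤ (∑ ‖f_k‖^r)^{1/r}` with `r = min(α,β)`. -/
theorem mixed_norm_disjoint_supports_sum (α β : ℝ) (hα : 1 ≤ α) (hβ : 1 ≤ β)
    (N : ℕ) (f : Fin (N + 1) → ℝ → ℝ → ℂ)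
    (hmeas : ∀ k, Measurable (Function.uncurry (f k)))
    (hdisj : ∀ k l, k ≠ l → ∀ t : ℝ,
      (∃ x, f k x t ≠ 0) → ¬ (∃ x, f l x t ≠ 0))
    (hfin : ∀ k, mixedLpNorm α β (f k) < ⊤) :
    mixedLpNorm α β (fun x t => ∑ k, f k x t)
      ≤ (∑ k, mixedLpNorm α β (f k) ^ min α β) ^ (1 / min α β) := by
  have hα0 : (0:ℝ) < α := lt_of_lt_of_le zero_lt_one hα
  have hβ0 : (0:ℝ) < β := lt_of_lt_of_le zero_lt_one hβ
  set g : Fin (N + 1) → ℝ → ℝ → ℝ≥0∞ := fun k x t => (‖f k x t‖₊ : ℝ≥0∞) ^ β with hg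
  -- pointwise: at each (x,t) at most one f k is nonzero
  have hpt : ∀ x t, (‖∑ k, f k x t‖₊ : ℝ≥0∞) ^ β = ∑ k, g k x t := by
    intro x t
    by_cases h : ∃ k, f k x t ≠ 0
    · obtain ⟨k₀, hk₀⟩ := h
      have hz : ∀ l, l ≠ k₀ → f l x t = 0 := by
        intro l hl
        by_contra hne
        exact hdisj k₀ l (Ne.symm hl) t ⟨x, hk₀⟩ ⟨x, hne⟩
      rw [Fintype.sum_eq_single k₀ hz]
      rw [Fintype.sum_eq_single k₀ (fun l hl => by
        simp [hg, hz l hl, ENNReal.zero_rpow_of_pos hβ0])]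
    · push_neg at h
      simp [hg, h, ENNReal.zero_rpow_of_pos hβ0]
  have hgmeas : ∀ k x, Measurable fun t => g k x t := fun k x =>
    (((hmeas k).comp measurable_prodMk_left).nnnorm.coe_nnreal_ennreal).pow_const β
  -- inner integral splits
  have hinner : ∀ x, (∫⁻ t : ℝ, (‖∑ k, f k x t‖₊ : ℝ≥0∞) ^ β) =
      ∑ k, ∫⁻ t, g k x t := by
    intro x
    rw [show (fun t => (‖∑ k, f k x t‖₊ : ℝ≥0∞) ^ β) = fun t => ∑ k, g k x t from
      funext fun t => hpt x t]
    exact lintegral_finset_sum _ fun k _ => hgmeas k x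
  set G : Fin (N + 1) → ℝ → ℝ≥0∞ := fun k x => ∫⁻ t, g k x t with hG
  have hGmeas : ∀ k, Measurable (G k) := by
    intro k
    exact Measurable.lintegral_prod_right
      (((hmeas k).nnnorm.coe_nnreal_ennreal).pow_const β)
  have hM : ∀ k, mixedLpNorm α β (f k) = (∫⁻ x, G k x ^ (α / β)) ^ (1 / α) := fun k => rfl
  have hMain : mixedLpNorm α β (fun x t => ∑ k, f k x t)
      = (∫⁻ x, (∑ k, G k x) ^ (α / β)) ^ (1 / α) := by
    unfold mixedLpNorm
    congr 1
    refine lintegral_congr fun x => ?_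
    rw [hinner x]
  rw [hMain]
  have hαβ0 : (0:ℝ) < α / β := div_pos hα0 hβ0
  rcases le_total β α with hle | hle
  · -- r = β, α/β ≥ 1, Minkowski
    rw [min_eq_right hle]
    have hp1 : (1:ℝ) ≤ α / β := (one_le_div hβ0).2 hle
    have key := lp_sum_le Finset.univ volume G hGmeas hp1
    have h1α : (1:ℝ) / α = 1 / (α / β) * (1 / β) := by
      field_simp
    calc (∫⁻ x, (∑ k, G k x) ^ (α / β)) ^ (1 / α)
        = ((∫⁻ x, (∑ k, G k x) ^ (α / β)) ^ (1 / (α / β))) ^ (1 / β) := by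
          rw [← ENNReal.rpow_mul, ← h1α]
      _ ≤ (∑ k, (∫⁻ x, G k x ^ (α / β)) ^ (1 / (α / β))) ^ (1 / β) := by
          gcongr
      _ = (∑ k, mixedLpNorm α β (f k) ^ β) ^ (1 / β) := by
          congr 1
          refine Finset.sum_congr rfl fun k _ => ?_
          rw [hM k, ← ENNReal.rpow_mul]
          congr 1
          field_simp
  · -- r = α, α/β ≤ 1, subadditivity
    rw [min_eq_left hle]
    have hp1 : α / β ≤ 1 := (div_le_one hβ0).2 hle
    have key : (∫⁻ x, (∑ k, G k x) ^ (α / β)) ≤ ∑ k, ∫⁻ x, G k x ^ (α / β) := by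
      calc (∫⁻ x, (∑ k, G k x) ^ (α / β)) ≤ ∫⁻ x, ∑ k, G k x ^ (α / β) :=
            lintegral_mono fun x => rpow_sum_le_sum_rpow _ _ hαβ0 hp1
        _ = ∑ k, ∫⁻ x, G k x ^ (α / β) :=
            lintegral_finset_sum _ fun k _ => (hGmeas k).pow_const _
    calc (∫⁻ x, (∑ k, G k x) ^ (α / β)) ^ (1 / α)
        ≤ (∑ k, ∫⁻ x, G k x ^ (α / β)) ^ (1 / α) := by gcongr
      _ = (∑ k, mixedLpNorm α β (f k) ^ α) ^ (1 / α) := by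
          congr 1
          refine Finset.sum_congr rfl fun k _ => ?_
          rw [hM k, ← ENNReal.rpow_mul, one_div, inv_mul_cancel₀ hα0.ne', ENNReal.rpow_one]
end

section
/- Let 1 ≤ q ≤ p < ∞ and let f : ℝ × ℝ → ℂ be measurable in the variables (y, s) with finite mixed norm ‖f‖_{L^p_y(L^q_s)} := (∫_y (∫_s |f(y,s)|^q ds)^{p/q} dy)^{1/p}. Define F(t) = ∫_y (∫_{s < t} |f(y,s)|^q ds)^{p/q} dy. Then for all real t_1 ≤ t_2, ∫_y (∫_{t_1 ≤ s < t_2} |f(y,s)|^q ds)^{p/q} dy ≤ F(t_2) − F(t_1). -/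
open MeasureTheory
open scoped ENNReal

/-- Case `p ≥ q` of the decomposition Lemma B.1: the `p`-th power of the mixed
`L^p_y(L^q_s)` norm of `f` restricted to a time slab `t₁ ≤ s < t₂` is controlled by the
increment of `F(t) = ∫_y (∫_{s<t} |f(y,s)|^q ds)^{p/q} dy`. -/
theorem mixed_norm_slab_increment_p_ge_q (p q : ℝ) (hq : 1 ≤ q) (hqp : q ≤ p)
    (f : ℝ → ℝ → ℂ) (hmeas : Measurable (Function.uncurry f))
    (hfin : (∫⁻ y : ℝ, (∫⁻ s : ℝ, (‖f y s‖₊ : ℝ≥0∞) ^ q) ^ (p / q)) ^ (1 / p) < ⊤)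
    (t₁ t₂ : ℝ) (h12 : t₁ ≤ t₂) :
    (∫⁻ y : ℝ, (∫⁻ s in Set.Ico t₁ t₂, (‖f y s‖₊ : ℝ≥0∞) ^ q) ^ (p / q))
      ≤ (∫⁻ y : ℝ, (∫⁻ s in Set.Iio t₂, (‖f y s‖₊ : ℝ≥0∞) ^ q) ^ (p / q))
        - (∫⁻ y : ℝ, (∫⁻ s in Set.Iio t₁, (‖f y s‖₊ : ℝ≥0∞) ^ q) ^ (p / q)) := by
  have hr : (1 : ℝ) ≤ p / q := (one_le_div (lt_of_lt_of_le one_pos hq)).2 hqp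
  have hg : Measurable fun z : ℝ × ℝ => (‖Function.uncurry f z‖₊ : ℝ≥0∞) ^ q :=
    (hmeas.nnnorm.coe_nnreal_ennreal).pow_const q
  have hm : ∀ S : Set ℝ,
      Measurable fun y : ℝ => (∫⁻ s in S, (‖f y s‖₊ : ℝ≥0∞) ^ q) ^ (p / q) := by
    intro S
    exact (Measurable.lintegral_prod_right (f := fun y s => (‖f y s‖₊ : ℝ≥0∞) ^ q)
      (ν := volume.restrict S) hg).pow_const _
  have hp : (0 : ℝ) < p := lt_of_lt_of_le one_pos (hq.trans hqp)
  have hItot : (∫⁻ y : ℝ, (∫⁻ s : ℝ, (‖f y s‖₊ : ℝ≥0∞) ^ q) ^ (p / q)) ≠ ⊤ := by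
    intro h
    rw [h, ENNReal.top_rpow_of_pos (by positivity)] at hfin
    exact (lt_irrefl _ hfin)
  have hF1 : (∫⁻ y : ℝ, (∫⁻ s in Set.Iio t₁, (‖f y s‖₊ : ℝ≥0∞) ^ q) ^ (p / q)) ≠ ⊤ := by
    refine ne_top_of_le_ne_top hItot (lintegral_mono fun y => ?_)
    exact ENNReal.rpow_le_rpow (setLIntegral_le_lintegral _ _) (by positivity)
  refine ENNReal.le_sub_of_add_le_left hF1 ?_
  rw [← lintegral_add_left (hm _)]
  refine lintegral_mono fun y => ?_
  have hsplit : (∫⁻ s in Set.Iio t₂, (‖f y s‖₊ : ℝ≥0∞) ^ q)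
      = (∫⁻ s in Set.Iio t₁, (‖f y s‖₊ : ℝ≥0∞) ^ q)
        + (∫⁻ s in Set.Ico t₁ t₂, (‖f y s‖₊ : ℝ≥0∞) ^ q) := by
    rw [← lintegral_union measurableSet_Ico ((Set.Iio_disjoint_Ici le_rfl).mono_right Set.Ico_subset_Ici_self),
      Set.Iio_union_Ico_eq_Iio h12]
  rw [hsplit]
  exact ENNReal.add_rpow_le_rpow_add _ _ hr
end

section
/- Let φ be a Schwartz function on ℝ whose Fourier transform equals 1 on {|ξ| ≤ 1} and vanishes for |ξ| > 2; set φ_j(x) = 2^j φ(2^j x), S_j u = φ_j ∗ u, and Δ_j u = S_{j+1} u − S_j u for j ∈ ℤ. For f : ℝ × ℝ → ℂ measurable in (x, s), let Δ_j f denote the operator Δ_j applied in the x variable for each fixed s. Define γ_j(t) = ∫_x (∫_{s < t} |Δ_j f(x,s)|² ds)^{1/2} dx and F(t) = Σ_{j∈ℤ} γ_j(t)², and assume F(t) < ∞ for all t. Then for all real t_1 ≤ t_2, Σ_{j∈ℤ} ( ∫_x (∫_{t_1 ≤ s < t_2} |Δ_j f(x,s)|² ds)^{1/2} dx )² ≤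 F(t_2) − F(t_1). -/
open MeasureTheory
open scoped ENNReal NNReal FourierTransform


private lemma pow2_half (y : ℝ≥0∞) : (y ^ ((1:ℝ)/2)) ^ (2:ℕ) = y := by
  rw [← ENNReal.rpow_natCast (y ^ ((1:ℝ)/2)) 2, ← ENNReal.rpow_mul]
  norm_num

private lemma rpow2_half (y : ℝ≥0∞) : (y ^ ((1:ℝ)/2)) ^ (2:ℝ) = y := by
  rw [← ENNReal.rpow_mul]; norm_num

/-- `(X - Y) * (X + Y) ≤ X² - Y²` in `ℝ≥0∞` when `Y ≤ X` and `Y ≠ ∞`. -/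
private lemma mul_le_sq_sub_sq (X Y : ℝ≥0∞) (hY : Y ≠ ⊤) (hYX : Y ≤ X) :
    (X - Y) * (X + Y) ≤ X ^ 2 - Y ^ 2 := by
  rcases eq_or_ne X ⊤ with hX | hX
  · subst hX
    have : (⊤ : ℝ≥0∞) ^ 2 - Y ^ 2 = ⊤ := by
      rw [ENNReal.top_pow (by norm_num : 2 ≠ 0), ENNReal.top_sub (ENNReal.pow_ne_top hY)]
    simp [this, ENNReal.top_sub hY, ENNReal.top_sub (ENNReal.pow_ne_top hY)]
  · lift X to ℝ≥0 using hX
    lift Y to ℝ≥0 using hY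
    rw [← ENNReal.coe_sub, ← ENNReal.coe_add, ← ENNReal.coe_mul, ← ENNReal.coe_pow,
      ← ENNReal.coe_pow, ← ENNReal.coe_sub, ENNReal.coe_le_coe]
    have hYX' : Y ≤ X := by exact_mod_cast hYX
    have h2 : Y ^ 2 ≤ X ^ 2 := pow_le_pow_left₀ zero_le hYX' 2
    apply le_of_eq
    apply NNReal.coe_injective
    push_cast [NNReal.coe_sub hYX', NNReal.coe_sub h2]
    ring

/-- `c² - a² ≤ (c - a) * (c + a)` in `ℝ≥0∞` when `a ≤ c`. -/
private lemma sq_sub_sq_le_mul (a c : ℝ≥0∞) (hac : a ≤ c) :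
    c ^ 2 - a ^ 2 ≤ (c - a) * (c + a) := by
  rcases eq_or_ne a ⊤ with ha | ha
  · subst ha
    have hc : c = ⊤ := top_le_iff.mp hac
    subst hc
    simp
  · rcases eq_or_ne c ⊤ with hc | hc
    · subst hc
      have h1 : (⊤ : ℝ≥0∞) - a = ⊤ := ENNReal.top_sub ha
      rw [h1, ENNReal.top_mul (by simp)]
      exact le_top
    · lift a to ℝ≥0 using ha
      lift c to ℝ≥0 using hc
      rw [← ENNReal.coe_sub, ← ENNReal.coe_add, ← ENNReal.coe_mul, ← ENNReal.coe_pow,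
        ← ENNReal.coe_pow, ← ENNReal.coe_sub, ENNReal.coe_le_coe]
      have hac' : a ≤ c := by exact_mod_cast hac
      have h2 : a ^ 2 ≤ c ^ 2 := pow_le_pow_left₀ zero_le hac' 2
      apply le_of_eq
      apply NNReal.coe_injective
      push_cast [NNReal.coe_sub hac', NNReal.coe_sub h2]
      ring

/-- Key abstract estimate: Cauchy–Schwarz applied to `J_b² - J_a² = (J_b - J_a)(J_b + J_a)`. -/
private lemma key_estimate (u v : ℝ → ℝ≥0∞) (hu : Measurable u) (hv : Measurable v)
    (hfin : (∫⁻ x, u x ^ ((1:ℝ)/2)) ≠ ⊤) :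
    (∫⁻ x, v x ^ ((1:ℝ)/2)) ^ 2
      ≤ (∫⁻ x, (u x + v x) ^ ((1:ℝ)/2)) ^ 2 - (∫⁻ x, u x ^ ((1:ℝ)/2)) ^ 2 := by
  set a : ℝ → ℝ≥0∞ := fun x => u x ^ ((1:ℝ)/2) with ha_def
  set c : ℝ → ℝ≥0∞ := fun x => (u x + v x) ^ ((1:ℝ)/2) with hc_def
  have ham : Measurable a := hu.pow_const _
  have hcm : Measurable c := (hu.add hv).pow_const _
  have hac : ∀ x, a x ≤ c x := fun x =>
    ENNReal.rpow_le_rpow le_self_add (by norm_num)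
  have hae : ∀ᵐ x : ℝ, a x < ⊤ := ae_lt_top ham hfin
  -- pointwise a.e. bound : v^{1/2} ≤ (c-a)^{1/2} * (c+a)^{1/2}
  have hpt : ∀ᵐ x : ℝ, v x ^ ((1:ℝ)/2) ≤ (c x - a x) ^ ((1:ℝ)/2) * (c x + a x) ^ ((1:ℝ)/2) := by
    filter_upwards [hae] with x hx
    have hux : u x ≠ ⊤ := by
      intro h
      rw [ha_def] at hx
      simp only [h] at hx
      rw [ENNReal.top_rpow_of_pos (by norm_num)] at hx
      exact (lt_irrefl _ hx)
    have hveq : v x = c x ^ 2 - a x ^ 2 := by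
      rw [hc_def, ha_def]
      simp only [pow2_half]
      exact (ENNReal.add_sub_cancel_left hux).symm
    have h1 : v x ≤ (c x - a x) * (c x + a x) := by
      rw [hveq]; exact sq_sub_sq_le_mul _ _ (hac x)
    calc v x ^ ((1:ℝ)/2) ≤ ((c x - a x) * (c x + a x)) ^ ((1:ℝ)/2) :=
          ENNReal.rpow_le_rpow h1 (by norm_num)
      _ = (c x - a x) ^ ((1:ℝ)/2) * (c x + a x) ^ ((1:ℝ)/2) :=
          ENNReal.mul_rpow_of_nonneg _ _ (by norm_num)
  -- Cauchy–Schwarz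
  have hCS : (∫⁻ x, v x ^ ((1:ℝ)/2))
      ≤ (∫⁻ x, (c x - a x)) ^ ((1:ℝ)/2) * (∫⁻ x, (c x + a x)) ^ ((1:ℝ)/2) := by
    have h2 := ENNReal.lintegral_mul_le_Lp_mul_Lq (volume : Measure ℝ)
      Real.HolderConjugate.two_two
      ((hcm.sub ham).pow_const ((1:ℝ)/2)).aemeasurable
      ((hcm.add ham).pow_const ((1:ℝ)/2)).aemeasurable
    simp only [Pi.mul_apply, rpow2_half] at h2
    calc (∫⁻ x, v x ^ ((1:ℝ)/2))
        ≤ ∫⁻ x, (c x - a x) ^ ((1:ℝ)/2) * (c x + a x) ^ ((1:ℝ)/2) := lintegral_mono_ae hpt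
      _ ≤ (∫⁻ x, (c x - a x)) ^ ((1:ℝ)/2) * (∫⁻ x, (c x + a x)) ^ ((1:ℝ)/2) := h2
  have hsub : (∫⁻ x, (c x - a x)) = (∫⁻ x, c x) - (∫⁻ x, a x) :=
    lintegral_sub ham hfin (Filter.Eventually.of_forall hac)
  have hadd : (∫⁻ x, (c x + a x)) = (∫⁻ x, c x) + (∫⁻ x, a x) :=
    lintegral_add_right _ ham
  calc (∫⁻ x, v x ^ ((1:ℝ)/2)) ^ 2
      ≤ ((∫⁻ x, (c x - a x)) ^ ((1:ℝ)/2) * (∫⁻ x, (c x + a x)) ^ ((1:ℝ)/2)) ^ 2 :=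
        pow_le_pow_left₀ zero_le hCS 2
    _ = (∫⁻ x, (c x - a x)) * (∫⁻ x, (c x + a x)) := by
        rw [mul_pow, pow2_half, pow2_half]
    _ = ((∫⁻ x, c x) - (∫⁻ x, a x)) * ((∫⁻ x, c x) + (∫⁻ x, a x)) := by rw [hsub, hadd]
    _ ≤ (∫⁻ x, c x) ^ 2 - (∫⁻ x, a x) ^ 2 :=
        mul_le_sq_sub_sq _ _ hfin (lintegral_mono hac)


/-- Besov-norm analogue of the decomposition Lemma B.1: with Littlewood–Paley blocks
`Δ_j` built from a Schwartz function `φ` whose Fourier transform is `1` on `{|ξ| ≤ 1}`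
and `0` on `{|ξ| > 2}`, setting `γ_j(t) = ∫_x (∫_{s<t} |Δ_j f(x,s)|² ds)^{1/2} dx` and
`F(t) = ∑_j γ_j(t)²`, one has
`∑_j (∫_x (∫_{t₁ ≤ s < t₂} |Δ_j f(x,s)|² ds)^{1/2} dx)² ≤ F(t₂) − F(t₁)`. -/
theorem besov_slab_increment (φ : SchwartzMap ℝ ℂ)
    (hφ1 : ∀ ξ : ℝ, |ξ| ≤ 1 → 𝓕 (⇑φ) ξ = 1)
    (hφ2 : ∀ ξ : ℝ, 2 < |ξ| → 𝓕 (⇑φ) ξ = 0)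
    (f : ℝ → ℝ → ℂ) (hf : Measurable (Function.uncurry f))
    (Δ : ℤ → ℝ → ℝ → ℂ)
    (hΔ : ∀ (j : ℤ) (x s : ℝ), Δ j x s =
      ∫ y : ℝ, ((2 : ℝ) ^ (j + 1) • φ ((2 : ℝ) ^ (j + 1) * (x - y))
        - (2 : ℝ) ^ j • φ ((2 : ℝ) ^ j * (x - y))) * f y s)
    (γ : ℤ → ℝ → ℝ≥0∞)
    (hγ : ∀ (j : ℤ) (t : ℝ), γ j t =
      ∫⁻ x : ℝ, (∫⁻ s in Set.Iio t, (‖Δ j x s‖₊ : ℝ≥0∞) ^ (2 : ℝ)) ^ ((1 : ℝ) / 2))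
    (F : ℝ → ℝ≥0∞) (hF : ∀ t : ℝ, F t = ∑' j : ℤ, γ j t ^ 2)
    (hFfin : ∀ t : ℝ, F t < ⊤)
    (t₁ t₂ : ℝ) (h12 : t₁ ≤ t₂) :
    (∑' j : ℤ,
        (∫⁻ x : ℝ, (∫⁻ s in Set.Ico t₁ t₂,
            (‖Δ j x s‖₊ : ℝ≥0∞) ^ (2 : ℝ)) ^ ((1 : ℝ) / 2)) ^ 2)
      ≤ F t₂ - F t₁ := by
  -- measurability of Δ j as a function of (x, s)
  have hΔm : ∀ j : ℤ, Measurable (fun p : ℝ × ℝ => Δ j p.1 p.2) := by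
    intro j
    have hK : Continuous (fun z : ℝ =>
        ((2 : ℝ) ^ (j + 1) • φ ((2 : ℝ) ^ (j + 1) * z)
          - (2 : ℝ) ^ j • φ ((2 : ℝ) ^ j * z))) := by
      apply Continuous.sub
      · exact (φ.continuous.comp (continuous_const.mul continuous_id)).const_smul ((2 : ℝ) ^ (j + 1))
      · exact (φ.continuous.comp (continuous_const.mul continuous_id)).const_smul ((2 : ℝ) ^ j)
    have hg : Measurable (fun p : (ℝ × ℝ) × ℝ =>
        ((2 : ℝ) ^ (j + 1) • φ ((2 : ℝ) ^ (j + 1) * (p.1.1 - p.2))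
          - (2 : ℝ) ^ j • φ ((2 : ℝ) ^ j * (p.1.1 - p.2))) * f p.2 p.1.2) := by
      apply Measurable.mul
      · exact hK.measurable.comp ((measurable_fst.comp measurable_fst).sub measurable_snd)
      · exact hf.comp (measurable_snd.prodMk (measurable_snd.comp measurable_fst))
    have heq : (fun p : ℝ × ℝ => Δ j p.1 p.2)
        = fun p : ℝ × ℝ => ∫ y : ℝ,
            ((2 : ℝ) ^ (j + 1) • φ ((2 : ℝ) ^ (j + 1) * (p.1 - y))
              - (2 : ℝ) ^ j • φ ((2 : ℝ) ^ j * (p.1 - y))) * f y p.2 :=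
      funext fun p => hΔ j p.1 p.2
    rw [heq]
    exact hg.stronglyMeasurable.integral_prod_right'.measurable
  have hΔm2 : ∀ j : ℤ, Measurable (fun p : ℝ × ℝ => (‖Δ j p.1 p.2‖₊ : ℝ≥0∞) ^ (2 : ℝ)) :=
    fun j => ((hΔm j).nnnorm.coe_nnreal_ennreal).pow_const _
  set u : ℤ → ℝ → ℝ≥0∞ :=
    fun j x => ∫⁻ s in Set.Iio t₁, (‖Δ j x s‖₊ : ℝ≥0∞) ^ (2 : ℝ) with hu_def
  set v : ℤ → ℝ → ℝ≥0∞ :=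
    fun j x => ∫⁻ s in Set.Ico t₁ t₂, (‖Δ j x s‖₊ : ℝ≥0∞) ^ (2 : ℝ) with hv_def
  have hum : ∀ j, Measurable (u j) := fun j => (hΔm2 j).lintegral_prod_right'
  have hvm : ∀ j, Measurable (v j) := fun j => (hΔm2 j).lintegral_prod_right'
  have huv : ∀ j x, u j x + v j x = ∫⁻ s in Set.Iio t₂, (‖Δ j x s‖₊ : ℝ≥0∞) ^ (2 : ℝ) := by
    intro j x
    rw [hu_def, hv_def]
    rw [← lintegral_union measurableSet_Ico
        ((Set.Iio_disjoint_Ici le_rfl).mono_right Set.Ico_subset_Ici_self),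
      Set.Iio_union_Ico_eq_Iio h12]
  -- finiteness of γ
  have hγfin : ∀ j t, F t < ⊤ → γ j t ≠ ⊤ := by
    intro j t ht h
    have : γ j t ^ 2 ≤ F t := by rw [hF t]; exact ENNReal.le_tsum j
    rw [h, ENNReal.top_pow (by norm_num : 2 ≠ 0), top_le_iff] at this
    exact absurd this ht.ne
  -- per-j estimate
  have hj : ∀ j : ℤ,
      (∫⁻ x : ℝ, (v j x) ^ ((1:ℝ)/2)) ^ 2 ≤ γ j t₂ ^ 2 - γ j t₁ ^ 2 := by
    intro j
    have h1 : γ j t₁ = ∫⁻ x, (u j x) ^ ((1:ℝ)/2) := hγ j t₁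
    have h2 : γ j t₂ = ∫⁻ x, (u j x + v j x) ^ ((1:ℝ)/2) := by
      rw [hγ j t₂]
      congr 1
      funext x
      rw [huv j x]
    have hfin : (∫⁻ x, (u j x) ^ ((1:ℝ)/2)) ≠ ⊤ := by
      rw [← h1]; exact hγfin j t₁ (hFfin t₁)
    rw [h1, h2]
    exact key_estimate (u j) (v j) (hum j) (hvm j) hfin
  -- sum over j
  calc (∑' j : ℤ, (∫⁻ x : ℝ, (v j x) ^ ((1:ℝ)/2)) ^ 2)
      ≤ ∑' j : ℤ, (γ j t₂ ^ 2 - γ j t₁ ^ 2) := ENNReal.tsum_le_tsum hj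
    _ ≤ F t₂ - F t₁ := by
        rw [hF t₁, hF t₂]
        apply ENNReal.le_sub_of_add_le_right
        · rw [← hF t₁]; exact (hFfin t₁).ne
        · rw [← ENNReal.tsum_add]
          apply ENNReal.tsum_le_tsum
          intro j
          have hle : γ j t₁ ^ 2 ≤ γ j t₂ ^ 2 := by
            apply pow_le_pow_left₀ zero_le
            rw [hγ j t₁, hγ j t₂]
            apply lintegral_mono
            intro x
            exact ENNReal.rpow_le_rpow
              (lintegral_mono_set (Set.Iio_subset_Iio h12)) (by norm_num)
          have : γ j t₁ ^ 2 ≠ ⊤ := ENNReal.pow_ne_top (hγfin j t₁ (hFfin t₁))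
          rw [tsub_add_cancel_of_le hle]
end
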